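/- arXiv:1911.02534 — 5 statements merged into one kernel-verified Lean document; each statement's English description precedes it below -/
import Mathlib

section
/- Over an algebraically closed field, the set of tensors $T \in U \otimes V \otimes W$ of minrank at most $r$ is Zariski closed. -/
/-
Let `f_{a,b}(T; x)` be the `(r+1)`-minors of the contraction `T x`; they are forms of degree
`r + 1` in `x` with coefficients polynomial in `T`, and `T` has minrank at most `r` exactly when
they have a common nonzero root `x`. For forms `f_i` of degree `D` over an algebraically closed
field, the Nullstellensatz turns "no common nonzero root" into "the ideal `(f_i)` contains every
form of some large degree `d + D`", and taking homogeneous components, into "the products of the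
`f_i` with monomials of degree `d` span all forms of degree `d + D`". That is a rank condition on
a coefficient matrix whose entries are polynomials in `T`, i.e. the nonvanishing of one of its
maximal minors. So the tensors of minrank at most `r` are cut out by all these maximal minors.
-/

open scoped BigOperators

/-- Contraction of a tensor against a linear functional on the first factor. -/
def contractT {F : Type*} [Field F] {α β γ : Type*} [Fintype α]
    (T : α → β → γ → F) (x : α → F) : Matrix β γ F :=
  Matrix.of fun j k => ∑ i, x i * T i j k

/-- `T` has minrank at most `r`. -/
def MinrankLE {F : Type*} [Field F] {α β γ : Type*} [Fintype α] [Fintype β] [Fintype γ]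
    (T : α → β → γ → F) (r : ℕ) : Prop :=
  ∃ x : α → F, x ≠ 0 ∧ (contractT T x).rank ≤ r

open Module Matrix

section LinearAlgebra

variable {K : Type*} [Field K]

theorem exists_linearIndependent_comp_of_card_le_finrank_span {ι V s : Type*} [AddCommGroup V]
    [Module K V] [FiniteDimensional K V] [Fintype s] (v : ι → V)
    (h : Fintype.card s ≤ finrank K (Submodule.span K (Set.range v))) :
    ∃ c : s → ι, LinearIndependent K (v ∘ c) := by
  obtain ⟨κ, a, -, hspan, hli⟩ := exists_linearIndependent' K v
  have := hli.finite_of_isNoetherian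
  have := Fintype.ofFinite κ
  rw [← hspan, finrank_span_eq_card hli] at h
  obtain ⟨e⟩ := Function.Embedding.nonempty_of_card_le h
  exact ⟨a ∘ e, hli.comp e e.injective⟩

theorem Matrix.det_ne_zero_iff_linearIndependent_col {m : Type*} [Fintype m] [DecidableEq m]
    {A : Matrix m m K} : A.det ≠ 0 ↔ LinearIndependent K A.col := by
  rw [linearIndependent_cols_iff_isUnit, isUnit_iff_isUnit_det, isUnit_iff_ne_zero]

theorem span_range_eq_top_iff_exists_det_ne_zero {ι R : Type*} [Fintype R] [DecidableEq R]
    (v : ι → R → K) :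
    Submodule.span K (Set.range v) = ⊤ ↔
      ∃ s : R → ι, (Matrix.of fun r w => v (s w) r).det ≠ 0 := by
  simp_rw [det_ne_zero_iff_linearIndependent_col]
  constructor
  · intro h
    exact exists_linearIndependent_comp_of_card_le_finrank_span v
      (by rw [h, finrank_top, finrank_fintype_fun_eq_card])
  · rintro ⟨s, hs⟩
    have hcols := hs.span_eq_top_of_card_eq_finrank' (finrank_fintype_fun_eq_card K).symm
    refine top_le_iff.1 (hcols.ge.trans (Submodule.span_mono ?_))
    rintro _ ⟨w, rfl⟩
    exact ⟨s w, rfl⟩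

theorem Matrix.exists_det_submatrix_ne_zero_of_lt_rank {m n : Type*} [Fintype m] [Fintype n]
    {M : Matrix m n K} {r : ℕ} (h : r < M.rank) :
    ∃ (a : Fin (r + 1) → m) (b : Fin (r + 1) → n), (M.submatrix a b).det ≠ 0 := by
  obtain ⟨a, ha⟩ := exists_linearIndependent_comp_of_card_le_finrank_span (s := Fin (r + 1))
    M.row (by rw [Fintype.card_fin, ← rank_eq_finrank_span_row]; omega)
  have hrank : (M.submatrix a id).rank = r + 1 := by
    rw [LinearIndependent.rank_matrix (M := M.submatrix a id) ha, Fintype.card_fin]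
  obtain ⟨b, hb⟩ := exists_linearIndependent_comp_of_card_le_finrank_span (s := Fin (r + 1))
    (M.submatrix a id).col (by rw [Fintype.card_fin, ← rank_eq_finrank_span_cols, hrank])
  exact ⟨a, b, det_ne_zero_iff_linearIndependent_col.2 hb⟩

theorem Matrix.rank_le_iff_forall_det_submatrix_eq_zero {m n : Type*} [Fintype m] [Fintype n]
    (M : Matrix m n K) (r : ℕ) :
    M.rank ≤ r ↔
      ∀ (a : Fin (r + 1) → m) (b : Fin (r + 1) → n), (M.submatrix a b).det = 0 := by
  refine ⟨fun h a b => ?_, fun h => ?_⟩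
  · by_contra hdet
    have hunit := (isUnit_iff_isUnit_det _).2 (isUnit_iff_ne_zero.2 hdet)
    have := (rank_of_isUnit _ hunit).symm.trans_le ((rank_submatrix_le M a b).trans h)
    rw [Fintype.card_fin] at this
    omega
  · by_contra hr
    obtain ⟨a, b, hab⟩ := exists_det_submatrix_ne_zero_of_lt_rank (not_le.1 hr)
    exact hab (h a b)

end LinearAlgebra

namespace MvPolynomial

variable {R σ κ ι : Type*}

abbrev DegreeExponents (κ : Type*) (d : ℕ) := {e : κ →₀ ℕ // e.degree = d}

instance [Fintype κ] [DecidableEq κ] (n : ℕ) : Fintype (DegreeExponents κ n) :=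
  Fintype.subtype (Finset.univ.finsuppAntidiag n) fun e => by simp [Finsupp.degree_eq_sum]

theorem IsHomogeneous.det [CommRing R] {n : Type*} [Fintype n] [DecidableEq n]
    {M : Matrix n n (MvPolynomial σ R)} {d : ℕ} (h : ∀ i j, (M i j).IsHomogeneous d) :
    M.det.IsHomogeneous (Fintype.card n * d) := by
  rw [Matrix.det_apply]
  refine IsHomogeneous.sum _ _ _ fun τ _ => ?_
  rw [Units.smul_def]
  refine zsmul_mem (?_ : _ ∈ homogeneousSubmodule σ R _) _
  simpa using IsHomogeneous.prod Finset.univ _ (fun _ => d) fun i _ => h (τ i) i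

theorem homogeneousComponent_add_mul [CommSemiring R] (c : MvPolynomial σ R)
    {g : MvPolynomial σ R} {D : ℕ} (hg : g.IsHomogeneous D) (d : ℕ) :
    homogeneousComponent (d + D) (c * g) = homogeneousComponent d c * g := by
  let := gradedAlgebra (σ := σ) (R := R)
  have h := DirectSum.coe_decompose_mul_of_right_mem_of_le (homogeneousSubmodule σ R) (a := c) hg
    (le_add_self (a := D) (b := d))
  rw [Nat.add_sub_cancel] at h
  rw [← decomposition.decompose'_apply, ← decomposition.decompose'_apply]
  exact h

noncomputable def monomialMultiples [CommSemiring R] (g : ι → MvPolynomial κ R) (d : ℕ)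
    (c : ι × DegreeExponents κ d) : MvPolynomial κ R :=
  monomial c.2.1 1 * g c.1

theorem isHomogeneous_monomialMultiples [CommSemiring R] {g : ι → MvPolynomial κ R} {D : ℕ}
    (hg : ∀ i, (g i).IsHomogeneous D) (d : ℕ) (c : ι × DegreeExponents κ d) :
    (monomialMultiples g d c).IsHomogeneous (d + D) :=
  (isHomogeneous_monomial 1 c.2.2).mul (hg c.1)

theorem IsHomogeneous.mul_mem_span_monomialMultiples [CommSemiring R] {q : MvPolynomial κ R}
    {d : ℕ} (hq : q.IsHomogeneous d) (g : ι → MvPolynomial κ R) (i : ι) :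
    q * g i ∈ Submodule.span R (Set.range (monomialMultiples g d)) := by
  rw [q.as_sum, Finset.sum_mul]
  refine Submodule.sum_mem _ fun e he => ?_
  have hdeg : e.degree = d := by
    rw [Finsupp.degree_eq_weight_one]
    exact hq (mem_support_iff.1 he)
  have : monomial e (coeff e q) * g i = coeff e q • monomialMultiples g d (i, ⟨e, hdeg⟩) := by
    change _ = coeff e q • (monomial e 1 * g i)
    rw [← smul_mul_assoc, smul_monomial, smul_eq_mul, mul_one]
  rw [this]
  exact Submodule.smul_mem _ _ (Submodule.subset_span ⟨_, rfl⟩)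

theorem homogeneousComponent_add_mem_span_monomialMultiples [CommSemiring R] [Fintype ι]
    {g : ι → MvPolynomial κ R} {D : ℕ} (hg : ∀ i, (g i).IsHomogeneous D)
    {p : MvPolynomial κ R} (hp : p ∈ Ideal.span (Set.range g)) (d : ℕ) :
    homogeneousComponent (d + D) p ∈ Submodule.span R (Set.range (monomialMultiples g d)) := by
  obtain ⟨c, rfl⟩ := Ideal.mem_span_range_iff_exists_fun.1 hp
  rw [map_sum]
  refine Submodule.sum_mem _ fun i _ => ?_
  rw [homogeneousComponent_add_mul _ (hg i)]
  exact (homogeneousComponent_isHomogeneous d (c i)).mul_mem_span_monomialMultiples g i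

variable {K : Type*} [Field K]

theorem mem_zeroLocus_span_range_iff {g : ι → MvPolynomial κ K} {x : κ → K} :
    x ∈ zeroLocus K (Ideal.span (Set.range g)) ↔ ∀ i, eval x (g i) = 0 := by
  simp only [mem_zeroLocus_iff]
  refine ⟨fun h i => h _ (Ideal.subset_span ⟨i, rfl⟩), fun h p hp => ?_⟩
  refine (Ideal.span_le (I := RingHom.ker (eval x))).2 ?_ hp
  rintro _ ⟨i, rfl⟩
  exact h i

theorem exists_isHomogeneous_mem_of_zeroLocus_subset_zero [IsAlgClosed K] [Finite κ]
    {I : Ideal (MvPolynomial κ K)} (hI : zeroLocus K I ⊆ {0}) :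
    ∃ N, ∀ n, N ≤ n → ∀ p : MvPolynomial κ K, p.IsHomogeneous n → p ∈ I := by
  have hrad : Ideal.span (Set.range X) ≤ I.radical := by
    rw [Ideal.span_le, ← vanishingIdeal_zeroLocus_eq_radical (K := K)]
    rintro _ ⟨j, rfl⟩ x hx
    simp [Set.mem_singleton_iff.1 (hI hx)]
  obtain ⟨N, hN⟩ := Ideal.exists_pow_le_of_le_radical_of_fg hrad
    (Submodule.fg_span (Set.finite_range _))
  refine ⟨N, fun n hn p hp => hN (Ideal.pow_le_pow_right hn ?_)⟩
  exact (Ideal.mem_span_pow_iff_exists_isHomogeneous X p).2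
    ⟨map C p, hp.map C, by rw [eval_map, eval₂_eta]⟩

theorem zeroLocus_span_subset_zero_iff [IsAlgClosed K] [Finite κ] [Fintype ι]
    {g : ι → MvPolynomial κ K} {D : ℕ} (hg : ∀ i, (g i).IsHomogeneous D) :
    zeroLocus K (Ideal.span (Set.range g)) ⊆ {0} ↔
      ∃ d, homogeneousSubmodule κ K (d + D) ≤
        Submodule.span K (Set.range (monomialMultiples g d)) := by
  constructor
  · intro h
    obtain ⟨N, hN⟩ := exists_isHomogeneous_mem_of_zeroLocus_subset_zero h
    refine ⟨N, fun p hp => ?_⟩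
    rw [← homogeneousComponent_eq_self hp]
    exact homogeneousComponent_add_mem_span_monomialMultiples hg (hN _ le_self_add p hp) N
  · rintro ⟨d, hd⟩ x hx
    by_contra hx0
    obtain ⟨j, hj⟩ := Function.ne_iff.1 hx0
    have hspan : Submodule.span K (Set.range (monomialMultiples g d)) ≤
        (Ideal.span (Set.range g)).restrictScalars K := by
      rw [Submodule.span_le]
      rintro _ ⟨c, rfl⟩
      exact Ideal.mul_mem_left _ _ (Ideal.subset_span ⟨c.1, rfl⟩)
    have := hx _ (hspan (hd (isHomogeneous_X_pow j (d + D))))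
    simp only [map_pow, aeval_X] at this
    exact hj (pow_eq_zero_iff'.1 this).1

theorem homogeneousSubmodule_le_span_iff_exists_det_ne_zero [Fintype κ] [DecidableEq κ]
    {v : ι → MvPolynomial κ K} {N : ℕ} (hv : ∀ i, (v i).IsHomogeneous N) :
    homogeneousSubmodule κ K N ≤ Submodule.span K (Set.range v) ↔
      ∃ s : DegreeExponents κ N → ι,
        (Matrix.of fun e w => coeff e.1 (v (s w))).det ≠ 0 := by
  let c : MvPolynomial κ K →ₗ[K] DegreeExponents κ N → K :=
    LinearMap.pi fun e => lcoeff K e.1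
  have hinj : ∀ p, p.IsHomogeneous N → c p = 0 → p = 0 := by
    intro p hp hcp
    ext e
    by_cases he : e.degree = N
    · exact congr_fun hcp ⟨e, he⟩
    · exact hp.coeff_eq_zero he
  have hsurj : (homogeneousSubmodule κ K N).map c = ⊤ := by
    refine eq_top_iff.2 fun w _ => ⟨∑ e, monomial e.1 (w e), ?_, ?_⟩
    · exact Submodule.sum_mem _ fun e _ => isHomogeneous_monomial _ e.2
    · funext e'
      simp [c, coeff_monomial, Subtype.coe_inj]
  have hle : Submodule.span K (Set.range v) ≤ homogeneousSubmodule κ K N :=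
    Submodule.span_le.2 (Set.range_subset_iff.2 hv)
  refine Iff.trans ?_ (span_range_eq_top_iff_exists_det_ne_zero fun i => c (v i))
  rw [Set.range_comp' c v, ← Submodule.map_span]
  constructor
  · intro h
    exact eq_top_iff.2 (hsurj.ge.trans (Submodule.map_mono h))
  · intro h p hp
    obtain ⟨q, hq, hqp⟩ := h.ge (Submodule.mem_top (x := c p))
    have := hinj (p - q) (hp.sub (hle hq)) (by rw [map_sub, hqp, sub_self])
    rwa [sub_eq_zero.1 this]

/-- The classical resultant system of the forms `f i` of degree `D`, whose coefficients are
polynomials in the parameters `σ`. -/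
noncomputable def resultantSystem [CommRing R] [Fintype κ] [DecidableEq κ]
    (f : ι → MvPolynomial κ (MvPolynomial σ R)) (D : ℕ) : Set (MvPolynomial σ R) :=
  ⋃ d : ℕ, Set.range fun s : DegreeExponents κ (d + D) → ι × DegreeExponents κ d =>
    (Matrix.of fun e w => coeff e.1 (monomialMultiples f d (s w))).det

theorem map_monomialMultiples [CommSemiring R] {S : Type*} [CommSemiring S] (φ : R →+* S)
    (g : ι → MvPolynomial κ R) (d : ℕ) (c : ι × DegreeExponents κ d) :
    map φ (monomialMultiples g d c) = monomialMultiples (fun i => map φ (g i)) d c := by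
  simp [monomialMultiples]

theorem setOf_exists_ne_zero_forall_eval_map_eq_zero [IsAlgClosed K] [Fintype κ]
    [DecidableEq κ] [Fintype ι] {f : ι → MvPolynomial κ (MvPolynomial σ K)} {D : ℕ}
    (hf : ∀ i, (f i).IsHomogeneous D) :
    {t : σ → K | ∃ x : κ → K, x ≠ 0 ∧ ∀ i, eval x (map (eval t) (f i)) = 0} =
      {t | ∀ p ∈ resultantSystem f D, eval t p = 0} := by
  ext t
  let ft := fun i => map (eval t) (f i)
  have hft : ∀ i, (ft i).IsHomogeneous D := fun i => (hf i).map _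
  have hdet : ∀ d (s : DegreeExponents κ (d + D) → ι × DegreeExponents κ d),
      eval t (Matrix.of fun e w => coeff e.1 (monomialMultiples f d (s w))).det =
        (Matrix.of fun e w => coeff e.1 (monomialMultiples ft d (s w))).det := by
    intro d s
    rw [RingHom.map_det]
    congr 1
    ext e w
    simp [← map_monomialMultiples, coeff_map, ft]
  calc (∃ x : κ → K, x ≠ 0 ∧ ∀ i, eval x (ft i) = 0)
      ↔ ¬ zeroLocus K (Ideal.span (Set.range ft)) ⊆ {0} := by
        simp only [Set.not_subset, Set.mem_singleton_iff, mem_zeroLocus_span_range_iff]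
        exact exists_congr fun x => and_comm
    _ ↔ ∀ d, ¬ homogeneousSubmodule κ K (d + D) ≤
          Submodule.span K (Set.range (monomialMultiples ft d)) := by
        rw [zeroLocus_span_subset_zero_iff hft, not_exists]
    _ ↔ ∀ p ∈ resultantSystem f D, eval t p = 0 := by
        simp only [homogeneousSubmodule_le_span_iff_exists_det_ne_zero
          (isHomogeneous_monomialMultiples hft _), not_exists, not_not, resultantSystem,
          Set.mem_iUnion, Set.mem_range, forall_exists_index]
        exact ⟨fun h p d s hs => hs ▸ (hdet d s).trans (h d s),
          fun h d s => (hdet d s).symm.trans (h _ d s rfl)⟩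

end MvPolynomial

open MvPolynomial

/-- The contraction of the generic tensor, with coordinates `X (i, j, l)` in the coefficient ring,
against the generic vector of variables `X i`. -/
noncomputable def genericContraction (α β γ R : Type*) [CommSemiring R] [Fintype α] :
    Matrix β γ (MvPolynomial α (MvPolynomial (α × β × γ) R)) :=
  Matrix.of fun j l => ∑ i, C (X (i, j, l)) * X i

theorem isHomogeneous_genericContraction (α β γ R : Type*) [CommSemiring R] [Fintype α]
    (j : β) (l : γ) :
    (genericContraction α β γ R j l).IsHomogeneous 1 :=
  IsHomogeneous.sum _ _ _ fun i _ => isHomogeneous_C_mul_X _ i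

noncomputable def genericMinor (α β γ R : Type*) [CommRing R] [Fintype α] (r : ℕ)
    (ab : (Fin r → β) × (Fin r → γ)) : MvPolynomial α (MvPolynomial (α × β × γ) R) :=
  ((genericContraction α β γ R).submatrix ab.1 ab.2).det

theorem isHomogeneous_genericMinor (α β γ R : Type*) [CommRing R] [Fintype α] (r : ℕ)
    (ab : (Fin r → β) × (Fin r → γ)) : (genericMinor α β γ R r ab).IsHomogeneous r := by
  have := IsHomogeneous.det (M := (genericContraction α β γ R).submatrix ab.1 ab.2)
    fun i j => isHomogeneous_genericContraction α β γ R (ab.1 i) (ab.2 j)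
  rwa [Fintype.card_fin, mul_one] at this

theorem eval_map_eval_genericMinor {α β γ K : Type*} [Field K] [Fintype α] {r : ℕ}
    (T : α → β → γ → K) (x : α → K) (ab : (Fin r → β) × (Fin r → γ)) :
    eval x (map (eval fun q => T q.1 q.2.1 q.2.2) (genericMinor α β γ K r ab)) =
      ((contractT T x).submatrix ab.1 ab.2).det := by
  rw [genericMinor, ← RingHom.comp_apply, RingHom.map_det]
  congr 1
  ext i j
  simp [genericContraction, contractT, mul_comm]

theorem minrankLE_iff_exists_ne_zero_forall_eval_genericMinor_eq_zero {α β γ K : Type*}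
    [Field K] [Fintype α] [Fintype β] [Fintype γ] (T : α → β → γ → K) (r : ℕ) :
    MinrankLE T r ↔ ∃ x : α → K, x ≠ 0 ∧ ∀ ab,
      eval x (map (eval fun q => T q.1 q.2.1 q.2.2) (genericMinor α β γ K (r + 1) ab)) = 0 := by
  simp only [MinrankLE, Matrix.rank_le_iff_forall_det_submatrix_eq_zero, Prod.forall,
    eval_map_eval_genericMinor]

/-- Over an algebraically closed field, the set of tensors of minrank at most `r`
is Zariski closed: it is the common zero locus of a set of polynomials in the
coordinates of the tensor. -/
theorem stmt3 {F : Type*} [Field F] [IsAlgClosed F] (k m n r : ℕ) :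
    ∃ P : Set (MvPolynomial (Fin k × Fin m × Fin n) F),
      {T : Fin k → Fin m → Fin n → F | MinrankLE T r} =
      {T : Fin k → Fin m → Fin n → F |
        ∀ p ∈ P, MvPolynomial.eval (fun q => T q.1 q.2.1 q.2.2) p = 0} := by
  refine ⟨resultantSystem (genericMinor (Fin k) (Fin m) (Fin n) F (r + 1)) (r + 1),
    Set.ext fun T => ?_⟩
  simpa [minrankLE_iff_exists_ne_zero_forall_eval_genericMinor_eq_zero] using
    Set.ext_iff.1 (setOf_exists_ne_zero_forall_eval_map_eq_zero
      (isHomogeneous_genericMinor (Fin k) (Fin m) (Fin n) F (r + 1))) fun q => T q.1 q.2.1 q.2.2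
end

section
/- Suppose $T \in F^k \otimes L \otimes L$ has the same stabilizer in $\mathsf{GL}_k \times \mathsf{GL}_s \times \mathsf{GL}_s$ as $T_{k,n,r}$ (with $r < n$). Then $T$ lies in the orbit $(\mathsf{GL}_k \times \mathsf{GL}_s \times \mathsf{GL}_s) \cdot T_{k,n,r}$; more precisely, $T = a_1 \sum_{j=1}^{r} e_1 \otimes e_{1j} \otimes e_{1j} + a_2 \sum_{i=2}^{k} \sum_{j=1}^{n} e_i \otimes e_{ij} \otimes e_{ij}$ for some nonzero scalars $a_1, a_2$. If instead the stabilizer of $T$ merely contains that of $T_{k,n,r}$, then $T$ has this form with $a_1, a_2$ possibly zero, and hence lies in the orbit closure of $T_{k,n,r}$. -/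
open Matrix
open scoped BigOperators

/-- The action of a triple of matrices on a tensor in coordinates. -/
def actT {F : Type*} [Field F] {α β γ : Type*} [Fintype α] [Fintype β] [Fintype γ]
    (A : Matrix α α F) (B : Matrix β β F) (C : Matrix γ γ F)
    (T : α → β → γ → F) : α → β → γ → F :=
  fun i j k => ∑ i', ∑ j', ∑ k', A i i' * B j j' * C k k' * T i' j' k'

/-- The first part `∑_{j ≤ r} e₁ ⊗ e_{1j} ⊗ e_{1j}` of `T_{k,n,r}` (with `k = k' + 1`,
`U`-index set `Fin 1 ⊕ Fin k'`, `L`-index set `Fin r ⊕ Fin k' × Fin n`). -/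
def Tpart1 (F : Type*) [Field F] (k' n r : ℕ) :
    (Fin 1 ⊕ Fin k') → (Fin r ⊕ Fin k' × Fin n) → (Fin r ⊕ Fin k' × Fin n) → F
  | Sum.inl _, Sum.inl a, Sum.inl b => if a = b then 1 else 0
  | _, _, _ => 0

/-- The second part `∑_{i=2}^{k} ∑_{j ≤ n} e_i ⊗ e_{ij} ⊗ e_{ij}` of `T_{k,n,r}`. -/
def Tpart2 (F : Type*) [Field F] (k' n r : ℕ) :
    (Fin 1 ⊕ Fin k') → (Fin r ⊕ Fin k' × Fin n) → (Fin r ⊕ Fin k' × Fin n) → F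
  | Sum.inr i, Sum.inr (i', a), Sum.inr (j', b) =>
      if i' = i ∧ j' = i ∧ a = b then 1 else 0
  | _, _, _ => 0

/-- The tensor `T_{k,n,r}`. -/
def Tknr (F : Type*) [Field F] (k' n r : ℕ) :
    (Fin 1 ⊕ Fin k') → (Fin r ⊕ Fin k' × Fin n) → (Fin r ⊕ Fin k' × Fin n) → F :=
  fun i a b => Tpart1 F k' n r i a b + Tpart2 F k' n r i a b

/-!
The stabilizer of `T_{k,n,r}` contains the torus elements
`(diag d, diag e, diag (d_{i(b)} e_b)⁻¹)`, where `i(b)` is the summand containing `e_b`, and the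
permutations of the basis of `L` that respect the decomposition `L = L₁ ⊕ ⋯ ⊕ L_k`. Invariance of
`T` under the torus kills every coordinate off the support of `T_{k,n,r}`, and invariance under the
permutations makes `T` constant on the support within `L₁` and within `L₂ ⊕ ⋯ ⊕ L_k`, so
`T = a₁ T₁ + a₂ T₂`. This tensor is the image of `T_{k,n,r}` under `diag(a₁, a₂, …, a₂) ∈ GL_k`.
If the stabilizers agree, a vanishing coefficient of a nonzero part `Tᵢ` is impossible: rescaling
that part would then fix `T` but not `T_{k,n,r}`. Finally, a polynomial vanishing on the orbit
vanishes on the torus `{x T₁ + y T₂ : x y ≠ 0}`, which is Zariski dense in the plane.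
-/

section General

variable {F : Type*} [Field F]

lemma exists_forall_eq_of_forall_eq {ι α : Type*} [Nonempty α] {f : ι → α}
    (h : ∀ i j, f i = f j) : ∃ c, ∀ i, f i = c := by
  rcases isEmpty_or_nonempty ι with hι | ⟨⟨i₀⟩⟩
  · exact ⟨Classical.arbitrary α, isEmptyElim⟩
  · exact ⟨f i₀, fun i => h i i₀⟩

lemma exists_ne_zero_smul_eq_smul {V : Type*} [AddCommGroup V] [Module F V] (a : F) (v : V)
    (h : a = 0 → v = 0) : ∃ b : F, b ≠ 0 ∧ b • v = a • v := by
  by_cases ha : a = 0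
  · exact ⟨1, one_ne_zero, by rw [ha, h ha, smul_zero, smul_zero]⟩
  · exact ⟨a, ha, rfl⟩

lemma eq_zero_of_smul_eq_self {V : Type*} [AddCommGroup V] [Module F V] {c : F} {v : V}
    (hc : c ≠ 1) (h : c • v = v) : v = 0 := by
  have : (c - 1) • v = 0 := by rw [sub_smul, one_smul, h, sub_self]
  exact (smul_eq_zero.1 this).resolve_left (sub_ne_zero.2 hc)

lemma exists_ne_zero_ne_one [Infinite F] : ∃ c : F, c ≠ 0 ∧ c ≠ 1 := by
  classical
  obtain ⟨c, hc⟩ := Infinite.exists_notMem_finset ({0, 1} : Finset F)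
  simp only [Finset.mem_insert, Finset.mem_singleton, not_or] at hc
  exact ⟨c, hc⟩

lemma mulSingle_apply_ne_zero {ι : Type*} [DecidableEq ι] {c : F} (hc : c ≠ 0) (x y : ι) :
    (Pi.mulSingle x c : ι → F) y ≠ 0 := by
  rw [Pi.mulSingle_apply]
  split_ifs
  exacts [hc, one_ne_zero]

end General

section Action

variable {F : Type*} [Field F] {α β γ : Type*} [Fintype α] [Fintype β] [Fintype γ]
  [DecidableEq α] [DecidableEq β] [DecidableEq γ]

def tensorStabilizer (T : α → β → γ → F) : Set (Matrix α α F × Matrix β β F × Matrix γ γ F) :=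
  {g | IsUnit g.1 ∧ IsUnit g.2.1 ∧ IsUnit g.2.2 ∧ actT g.1 g.2.1 g.2.2 T = T}

lemma mem_tensorStabilizer {T : α → β → γ → F} {A : Matrix α α F} {B : Matrix β β F}
    {C : Matrix γ γ F} :
    (A, B, C) ∈ tensorStabilizer T ↔ IsUnit A ∧ IsUnit B ∧ IsUnit C ∧ actT A B C T = T :=
  Iff.rfl

lemma actT_eq_self_of_stabilizer_subset {S T : α → β → γ → F}
    (hST : tensorStabilizer S ⊆ tensorStabilizer T) {A : Matrix α α F} {B : Matrix β β F}
    {C : Matrix γ γ F} (hA : IsUnit A) (hB : IsUnit B) (hC : IsUnit C)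
    (hS : actT A B C S = S) : actT A B C T = T :=
  (mem_tensorStabilizer.1 (hST (mem_tensorStabilizer.2 ⟨hA, hB, hC, hS⟩))).2.2.2

lemma actT_diagonal (d : α → F) (e : β → F) (f : γ → F) (T : α → β → γ → F) :
    actT (diagonal d) (diagonal e) (diagonal f) T = fun i a b => d i * e a * f b * T i a b := by
  funext i a b
  simp [actT, diagonal_apply, ite_mul, Finset.sum_ite_eq]

lemma actT_permMatrix (σ : Equiv.Perm α) (ρ : Equiv.Perm β) (τ : Equiv.Perm γ)
    (T : α → β → γ → F) :
    actT (σ.permMatrix F) (ρ.permMatrix F) (τ.permMatrix F) T =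
      fun i a b => T (σ i) (ρ a) (τ b) := by
  funext i a b
  simp [actT, PEquiv.toMatrix_apply, ite_mul, Finset.sum_ite_eq]

lemma isUnit_diagonal_of_ne_zero {d : α → F} (hd : ∀ i, d i ≠ 0) : IsUnit (diagonal d) :=
  isUnit_diagonal.2 (Pi.isUnit_iff.2 fun i => (hd i).isUnit)

lemma isUnit_permMatrix (σ : Equiv.Perm α) : IsUnit (σ.permMatrix F) := by
  rw [isUnit_iff_isUnit_det, det_permutation]
  exact (Equiv.Perm.sign σ).isUnit.map (Int.castRingHom F)

end Action

section Polynomial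

open MvPolynomial

variable {R : Type*} [CommRing R] [IsDomain R] [Infinite R]

theorem MvPolynomial.eq_zero_of_eval_eq_zero_of_forall_ne_zero {σ : Type*} [Fintype σ]
    {q : MvPolynomial σ R} (h : ∀ x : σ → R, (∀ s, x s ≠ 0) → eval x q = 0) : q = 0 := by
  have hX : (∏ s, X s : MvPolynomial σ R) ≠ 0 := Finset.prod_ne_zero_iff.2 fun s _ => X_ne_zero s
  refine (mul_eq_zero.1 (MvPolynomial.funext fun x => ?_)).resolve_right hX
  rw [map_mul, map_prod, map_zero]
  by_cases hx : ∀ s, x s ≠ 0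
  · rw [h x hx, zero_mul]
  · push Not at hx
    obtain ⟨s, hs⟩ := hx
    rw [Finset.prod_eq_zero (Finset.mem_univ s) (by rwa [eval_X]), mul_zero]

theorem MvPolynomial.eval_smul_add_smul_eq_zero {ι : Type*} (P Q : ι → R) (p : MvPolynomial ι R)
    (h : ∀ x y : R, x ≠ 0 → y ≠ 0 → eval (x • P + y • Q) p = 0) (x y : R) :
    eval (x • P + y • Q) p = 0 := by
  set q : MvPolynomial (Fin 2) R := aeval (fun i => X 0 * C (P i) + X 1 * C (Q i)) p
  have hq : ∀ z : Fin 2 → R, eval z q = eval (z 0 • P + z 1 • Q) p := by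
    intro z
    rw [map_aeval, show (eval z).comp (algebraMap R (MvPolynomial (Fin 2) R)) = RingHom.id R from
      RingHom.ext fun a => by simp, coe_eval₂Hom, eval₂_id]
    refine congrArg (fun v => eval v p) (_root_.funext fun i => ?_)
    simp [mul_comm]
  have hq0 : q = 0 := eq_zero_of_eval_eq_zero_of_forall_ne_zero fun z hz =>
    (hq z).trans (h _ _ (hz 0) (hz 1))
  simpa [hq0] using (hq ![x, y]).symm

end Polynomial

section Tknr

variable {F : Type*} [Field F] {k' n r : ℕ}

def summandIndex : (Fin r ⊕ Fin k' × Fin n) → Fin 1 ⊕ Fin k' :=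
  Sum.elim (fun _ => Sum.inl 0) (fun a => Sum.inr a.1)

lemma smul_Tpart1_add_smul_Tpart2_apply (a₁ a₂ : F) (i : Fin 1 ⊕ Fin k')
    (a b : Fin r ⊕ Fin k' × Fin n) :
    (a₁ • Tpart1 F k' n r + a₂ • Tpart2 F k' n r) i a b =
      if a = b ∧ i = summandIndex a then Sum.elim (fun _ => a₁) (fun _ => a₂) a else 0 := by
  rcases i with i | i
  · obtain rfl : i = 0 := Subsingleton.elim _ _
    rcases a with a | a <;> rcases b with b | b <;> simp [Tpart1, Tpart2, summandIndex]
  · rcases a with a | ⟨ia, a⟩ <;> rcases b with b | ⟨ib, b⟩ <;>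
      simp [Tpart1, Tpart2, summandIndex]
    grind

lemma Tknr_eq_smul_add_smul :
    Tknr F k' n r = (1 : F) • Tpart1 F k' n r + (1 : F) • Tpart2 F k' n r := by
  simp only [one_smul]
  rfl

lemma Tknr_apply (i : Fin 1 ⊕ Fin k') (a b : Fin r ⊕ Fin k' × Fin n) :
    Tknr F k' n r i a b = if a = b ∧ i = summandIndex a then 1 else 0 := by
  rw [Tknr_eq_smul_add_smul, smul_Tpart1_add_smul_Tpart2_apply]
  rcases a with a | a <;> rfl

lemma actT_torus_Tknr {d : Fin 1 ⊕ Fin k' → F} {e : Fin r ⊕ Fin k' × Fin n → F}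
    (hd : ∀ i, d i ≠ 0) (he : ∀ a, e a ≠ 0) :
    actT (diagonal d) (diagonal e) (diagonal fun b => (d (summandIndex b) * e b)⁻¹)
      (Tknr F k' n r) = Tknr F k' n r := by
  rw [actT_diagonal]
  funext i a b
  rw [Tknr_apply]
  split_ifs with h
  · obtain ⟨rfl, rfl⟩ := h
    rw [mul_one, mul_inv_cancel₀ (mul_ne_zero (hd _) (he _))]
  · rw [mul_zero]

def blockPerm (σr : Equiv.Perm (Fin r)) (σk : Equiv.Perm (Fin k')) (σn : Equiv.Perm (Fin n)) :
    Equiv.Perm (Fin r ⊕ Fin k' × Fin n) :=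
  σr.sumCongr (σk.prodCongr σn)

lemma summandIndex_blockPerm (σr : Equiv.Perm (Fin r)) (σk : Equiv.Perm (Fin k'))
    (σn : Equiv.Perm (Fin n)) (a : Fin r ⊕ Fin k' × Fin n) :
    summandIndex (blockPerm σr σk σn a) =
      (1 : Equiv.Perm (Fin 1)).sumCongr σk (summandIndex a) := by
  rcases a with a | a <;> rfl

lemma actT_blockPerm_Tknr (σr : Equiv.Perm (Fin r)) (σk : Equiv.Perm (Fin k'))
    (σn : Equiv.Perm (Fin n)) :
    actT (((1 : Equiv.Perm (Fin 1)).sumCongr σk).permMatrix F) ((blockPerm σr σk σn).permMatrix F)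
      ((blockPerm σr σk σn).permMatrix F) (Tknr F k' n r) = Tknr F k' n r := by
  rw [actT_permMatrix]
  funext i a b
  simp only [Tknr_apply, summandIndex_blockPerm, EmbeddingLike.apply_eq_iff_eq]

def blockScale (c₁ c₂ : F) : Matrix (Fin 1 ⊕ Fin k') (Fin 1 ⊕ Fin k') F :=
  diagonal (Sum.elim (fun _ => c₁) (fun _ => c₂))

lemma isUnit_blockScale {c₁ c₂ : F} (h₁ : c₁ ≠ 0) (h₂ : c₂ ≠ 0) :
    IsUnit (blockScale (k' := k') c₁ c₂) :=
  isUnit_diagonal_of_ne_zero (by rintro (i | i); exacts [h₁, h₂])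

lemma actT_blockScale (c₁ c₂ a₁ a₂ : F) :
    actT (blockScale c₁ c₂) 1 1 (a₁ • Tpart1 F k' n r + a₂ • Tpart2 F k' n r) =
      (c₁ * a₁) • Tpart1 F k' n r + (c₂ * a₂) • Tpart2 F k' n r := by
  rw [blockScale, ← diagonal_one, actT_diagonal]
  funext i a b
  simp only [mul_one, smul_Tpart1_add_smul_Tpart2_apply]
  split_ifs with h
  · obtain ⟨rfl, rfl⟩ := h
    rcases a with a | a <;> rfl
  · rw [mul_zero]

lemma actT_blockScale_Tknr (c₁ c₂ : F) :
    actT (blockScale c₁ c₂) 1 1 (Tknr F k' n r) = c₁ • Tpart1 F k' n r + c₂ • Tpart2 F k' n r := by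
  rw [Tknr_eq_smul_add_smul, actT_blockScale, mul_one, mul_one]

end Tknr

section Stabilizer

variable {F : Type*} [Field F] {k' n r : ℕ}
  {T : (Fin 1 ⊕ Fin k') → (Fin r ⊕ Fin k' × Fin n) → (Fin r ⊕ Fin k' × Fin n) → F}

lemma torus_mul_apply_eq_of_stabilizer_subset
    (hT : tensorStabilizer (Tknr F k' n r) ⊆ tensorStabilizer T)
    {d : Fin 1 ⊕ Fin k' → F} {e : Fin r ⊕ Fin k' × Fin n → F}
    (hd : ∀ i, d i ≠ 0) (he : ∀ a, e a ≠ 0) (i : Fin 1 ⊕ Fin k') (a b : Fin r ⊕ Fin k' × Fin n) :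
    d i * e a * (d (summandIndex b) * e b)⁻¹ * T i a b = T i a b := by
  have h := actT_eq_self_of_stabilizer_subset hT (isUnit_diagonal_of_ne_zero hd)
    (isUnit_diagonal_of_ne_zero he)
    (isUnit_diagonal_of_ne_zero fun b => inv_ne_zero (mul_ne_zero (hd _) (he _)))
    (actT_torus_Tknr hd he)
  rw [actT_diagonal] at h
  exact congrFun (congrFun (congrFun h i) a) b

lemma apply_blockPerm_of_stabilizer_subset
    (hT : tensorStabilizer (Tknr F k' n r) ⊆ tensorStabilizer T)
    (σr : Equiv.Perm (Fin r)) (σk : Equiv.Perm (Fin k')) (σn : Equiv.Perm (Fin n))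
    (i : Fin 1 ⊕ Fin k') (a b : Fin r ⊕ Fin k' × Fin n) :
    T ((1 : Equiv.Perm (Fin 1)).sumCongr σk i) (blockPerm σr σk σn a) (blockPerm σr σk σn b) =
      T i a b := by
  have h := actT_eq_self_of_stabilizer_subset hT (isUnit_permMatrix _)
    (isUnit_permMatrix _) (isUnit_permMatrix _) (actT_blockPerm_Tknr σr σk σn)
  rw [actT_permMatrix] at h
  exact congrFun (congrFun (congrFun h i) a) b

lemma apply_eq_zero_of_stabilizer_subset [Infinite F]
    (hT : tensorStabilizer (Tknr F k' n r) ⊆ tensorStabilizer T) {i : Fin 1 ⊕ Fin k'}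
    {a b : Fin r ⊕ Fin k' × Fin n} (hiab : ¬(a = b ∧ i = summandIndex a)) : T i a b = 0 := by
  obtain ⟨c, hc₀, hc₁⟩ := exists_ne_zero_ne_one (F := F)
  refine by_contra fun hne => hc₁ ((mul_eq_right₀ hne).1 ?_)
  by_cases hab : a = b
  · subst hab
    have hi : summandIndex a ≠ i := fun h => hiab ⟨rfl, h.symm⟩
    simpa [Pi.mulSingle_eq_of_ne hi] using
      torus_mul_apply_eq_of_stabilizer_subset hT (mulSingle_apply_ne_zero hc₀ i)
        (fun _ => one_ne_zero) i a a
  · simpa [Pi.mulSingle_eq_of_ne' hab] using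
      torus_mul_apply_eq_of_stabilizer_subset hT (fun _ => one_ne_zero)
        (mulSingle_apply_ne_zero hc₀ a) i a b

lemma exists_eq_smul_add_smul_of_stabilizer_subset [Infinite F]
    (hT : tensorStabilizer (Tknr F k' n r) ⊆ tensorStabilizer T) :
    ∃ a₁ a₂ : F, T = a₁ • Tpart1 F k' n r + a₂ • Tpart2 F k' n r := by
  obtain ⟨a₁, h₁⟩ : ∃ a₁, ∀ j : Fin r, T (Sum.inl 0) (Sum.inl j) (Sum.inl j) = a₁ :=
    exists_forall_eq_of_forall_eq fun j j' => by
      simpa [blockPerm] using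
        (apply_blockPerm_of_stabilizer_subset hT (Equiv.swap j j') 1 1
          (Sum.inl 0) (Sum.inl j) (Sum.inl j)).symm
  obtain ⟨a₂, h₂⟩ : ∃ a₂, ∀ p : Fin k' × Fin n, T (Sum.inr p.1) (Sum.inr p) (Sum.inr p) = a₂ :=
    exists_forall_eq_of_forall_eq fun ⟨i, α⟩ ⟨i', α'⟩ => by
      simpa [blockPerm] using
        (apply_blockPerm_of_stabilizer_subset hT 1 (Equiv.swap i i') (Equiv.swap α α')
          (Sum.inr i) (Sum.inr (i, α)) (Sum.inr (i, α))).symm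
  refine ⟨a₁, a₂, funext fun i => funext fun a => funext fun b => ?_⟩
  rw [smul_Tpart1_add_smul_Tpart2_apply]
  split_ifs with h
  · obtain ⟨rfl, rfl⟩ := h
    rcases a with j | p
    exacts [h₁ j, h₂ p]
  · exact apply_eq_zero_of_stabilizer_subset hT h

lemma Tpart_eq_zero_of_stabilizer_subset [Infinite F] {a₁ a₂ : F}
    (hT : tensorStabilizer (a₁ • Tpart1 F k' n r + a₂ • Tpart2 F k' n r) ⊆
      tensorStabilizer (Tknr F k' n r)) :
    (a₁ = 0 → Tpart1 F k' n r = 0) ∧ (a₂ = 0 → Tpart2 F k' n r = 0) := by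
  obtain ⟨c, hc₀, hc₁⟩ := exists_ne_zero_ne_one (F := F)
  have key : ∀ c₁ c₂ : F, c₁ ≠ 0 → c₂ ≠ 0 → c₁ * a₁ = a₁ → c₂ * a₂ = a₂ →
      c₁ • Tpart1 F k' n r + c₂ • Tpart2 F k' n r = Tpart1 F k' n r + Tpart2 F k' n r := by
    intro c₁ c₂ h₁ h₂ ha₁ ha₂
    have h := actT_eq_self_of_stabilizer_subset hT (isUnit_blockScale h₁ h₂) isUnit_one
      isUnit_one (by rw [actT_blockScale, ha₁, ha₂])
    rwa [actT_blockScale_Tknr, Tknr_eq_smul_add_smul, one_smul, one_smul] at h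
  constructor
  · rintro rfl
    refine eq_zero_of_smul_eq_self hc₁ (add_right_cancel (b := Tpart2 F k' n r) ?_)
    simpa using key c 1 hc₀ one_ne_zero (mul_zero c) (one_mul a₂)
  · rintro rfl
    refine eq_zero_of_smul_eq_self hc₁ (add_left_cancel (a := Tpart1 F k' n r) ?_)
    simpa using key 1 c one_ne_zero hc₀ (one_mul a₁) (mul_zero c)

end Stabilizer

theorem stmt8_general {F : Type*} [Field F] [IsAlgClosed F] (k' n r : ℕ)
    (T : (Fin 1 ⊕ Fin k') → (Fin r ⊕ Fin k' × Fin n) → (Fin r ⊕ Fin k' × Fin n) → F) :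
    ((∀ (A : Matrix (Fin 1 ⊕ Fin k') (Fin 1 ⊕ Fin k') F)
        (B C : Matrix (Fin r ⊕ Fin k' × Fin n) (Fin r ⊕ Fin k' × Fin n) F),
        IsUnit A → IsUnit B → IsUnit C →
        (actT A B C T = T ↔ actT A B C (Tknr F k' n r) = Tknr F k' n r)) →
      ∃ a₁ a₂ : F, a₁ ≠ 0 ∧ a₂ ≠ 0 ∧
        T = (fun i a b => a₁ * Tpart1 F k' n r i a b + a₂ * Tpart2 F k' n r i a b) ∧
        ∃ A B C, IsUnit A ∧ IsUnit B ∧ IsUnit C ∧ T = actT A B C (Tknr F k' n r)) ∧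
    ((∀ (A : Matrix (Fin 1 ⊕ Fin k') (Fin 1 ⊕ Fin k') F)
        (B C : Matrix (Fin r ⊕ Fin k' × Fin n) (Fin r ⊕ Fin k' × Fin n) F),
        IsUnit A → IsUnit B → IsUnit C →
        actT A B C (Tknr F k' n r) = Tknr F k' n r → actT A B C T = T) →
      ∃ a₁ a₂ : F,
        T = (fun i a b => a₁ * Tpart1 F k' n r i a b + a₂ * Tpart2 F k' n r i a b) ∧
        ∀ p : MvPolynomial ((Fin 1 ⊕ Fin k') × (Fin r ⊕ Fin k' × Fin n) ×
            (Fin r ⊕ Fin k' × Fin n)) F,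
          (∀ S, (∃ A B C, IsUnit A ∧ IsUnit B ∧ IsUnit C ∧
              S = actT A B C (Tknr F k' n r)) →
            MvPolynomial.eval (fun q => S q.1 q.2.1 q.2.2) p = 0) →
          MvPolynomial.eval (fun q => T q.1 q.2.1 q.2.2) p = 0) := by
  refine ⟨fun hT => ?_, fun hT => ?_⟩
  · have hle : tensorStabilizer (Tknr F k' n r) ⊆ tensorStabilizer T :=
      fun _ ⟨hA, hB, hC, h⟩ => ⟨hA, hB, hC, (hT _ _ _ hA hB hC).2 h⟩
    have hge : tensorStabilizer T ⊆ tensorStabilizer (Tknr F k' n r) :=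
      fun _ ⟨hA, hB, hC, h⟩ => ⟨hA, hB, hC, (hT _ _ _ hA hB hC).1 h⟩
    obtain ⟨a₁, a₂, rfl⟩ := exists_eq_smul_add_smul_of_stabilizer_subset hle
    obtain ⟨h₁, h₂⟩ := Tpart_eq_zero_of_stabilizer_subset hge
    obtain ⟨b₁, hb₁, e₁⟩ := exists_ne_zero_smul_eq_smul a₁ _ h₁
    obtain ⟨b₂, hb₂, e₂⟩ := exists_ne_zero_smul_eq_smul a₂ _ h₂
    rw [← e₁, ← e₂]
    refine ⟨b₁, b₂, hb₁, hb₂, rfl, blockScale b₁ b₂, 1, 1, isUnit_blockScale hb₁ hb₂, isUnit_one,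
      isUnit_one, (actT_blockScale_Tknr b₁ b₂).symm⟩
  · obtain ⟨a₁, a₂, rfl⟩ := exists_eq_smul_add_smul_of_stabilizer_subset
      fun _ ⟨hA, hB, hC, h⟩ => ⟨hA, hB, hC, hT _ _ _ hA hB hC h⟩
    refine ⟨a₁, a₂, rfl, fun p hp => ?_⟩
    refine MvPolynomial.eval_smul_add_smul_eq_zero (fun q => Tpart1 F k' n r q.1 q.2.1 q.2.2)
      (fun q => Tpart2 F k' n r q.1 q.2.1 q.2.2) p
      (fun x y hx hy => hp (x • Tpart1 F k' n r + y • Tpart2 F k' n r) ?_) a₁ a₂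
    exact ⟨blockScale x y, 1, 1, isUnit_blockScale hx hy, isUnit_one, isUnit_one,
      (actT_blockScale_Tknr x y).symm⟩

/-- If `T ∈ F^k ⊗ L ⊗ L` has the same stabilizer in `GL_k × GL_s × GL_s` as `T_{k,n,r}`
(`r < n`), then `T = a₁ ∑_j e₁ ⊗ e_{1j} ⊗ e_{1j} + a₂ ∑_{i≥2} ∑_j e_i ⊗ e_{ij} ⊗ e_{ij}`
with `a₁, a₂ ≠ 0`, and hence `T` lies in the orbit of `T_{k,n,r}`.  If the stabilizer of
`T` merely contains that of `T_{k,n,r}`, then `T` has this form with `a₁, a₂` possibly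
zero, and `T` lies in the Zariski closure of the orbit of `T_{k,n,r}`. -/
theorem stmt8 {F : Type*} [Field F] [IsAlgClosed F] (k' n r : ℕ) (hr : r < n)
    (T : (Fin 1 ⊕ Fin k') → (Fin r ⊕ Fin k' × Fin n) → (Fin r ⊕ Fin k' × Fin n) → F) :
    ((∀ (A : Matrix (Fin 1 ⊕ Fin k') (Fin 1 ⊕ Fin k') F)
        (B C : Matrix (Fin r ⊕ Fin k' × Fin n) (Fin r ⊕ Fin k' × Fin n) F),
        IsUnit A → IsUnit B → IsUnit C →
        (actT A B C T = T ↔ actT A B C (Tknr F k' n r) = Tknr F k' n r)) →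
      ∃ a₁ a₂ : F, a₁ ≠ 0 ∧ a₂ ≠ 0 ∧
        T = (fun i a b => a₁ * Tpart1 F k' n r i a b + a₂ * Tpart2 F k' n r i a b) ∧
        ∃ A B C, IsUnit A ∧ IsUnit B ∧ IsUnit C ∧ T = actT A B C (Tknr F k' n r)) ∧
    ((∀ (A : Matrix (Fin 1 ⊕ Fin k') (Fin 1 ⊕ Fin k') F)
        (B C : Matrix (Fin r ⊕ Fin k' × Fin n) (Fin r ⊕ Fin k' × Fin n) F),
        IsUnit A → IsUnit B → IsUnit C →
        actT A B C (Tknr F k' n r) = Tknr F k' n r → actT A B C T = T) →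
      ∃ a₁ a₂ : F,
        T = (fun i a b => a₁ * Tpart1 F k' n r i a b + a₂ * Tpart2 F k' n r i a b) ∧
        ∀ p : MvPolynomial ((Fin 1 ⊕ Fin k') × (Fin r ⊕ Fin k' × Fin n) ×
            (Fin r ⊕ Fin k' × Fin n)) F,
          (∀ S, (∃ A B C, IsUnit A ∧ IsUnit B ∧ IsUnit C ∧
              S = actT A B C (Tknr F k' n r)) →
            MvPolynomial.eval (fun q => S q.1 q.2.1 q.2.2) p = 0) →
          MvPolynomial.eval (fun q => T q.1 q.2.1 q.2.2) p = 0) :=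
  stmt8_general k' n r T
end

section
/- Let $0 < p < k$ and let $T \in U^* \otimes V^* \otimes W^*$ have minrank at most $r$. Then the Koszul flattening $F_{T,p}: \Lambda^p U^* \otimes V \to \Lambda^{p+1}U^* \otimes W^*$ satisfies $\operatorname{rk} F_{T,p} \leq \binom{k-1}{p}\big(r + \min(m, \tfrac{k-p-1}{p+1}n) + \min(n, \tfrac{p}{k-p}m)\big)$. -/
open scoped BigOperators

/-- The Koszul flattening `F_{T,p} : Λ^p U^* ⊗ V → Λ^{p+1} U^* ⊗ W^*` of a tensor
`T ∈ U^* ⊗ V^* ⊗ W^*`, written in the standard bases:  rows are indexed by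
`(p+1)`-subsets `J` of `Fin k` together with a `W`-index, columns by `p`-subsets `I`
together with a `V`-index, and the entry is `± T_{a,b,c}` if `I = J \ {a}` (with the
usual Koszul sign) and `0` otherwise. -/
def koszulM {F : Type*} [Field F] {k m n : ℕ} (p : ℕ) (T : Fin k → Fin m → Fin n → F) :
    Matrix ({J : Finset (Fin k) // J.card = p + 1} × Fin n)
           ({I : Finset (Fin k) // I.card = p} × Fin m) F :=
  Matrix.of fun Jc Ib =>
    ∑ a ∈ Jc.1.1, if Ib.1.1 = Jc.1.1.erase a then
      ((-1 : F) ^ (Jc.1.1.filter (· < a)).card) * T a Ib.2 Jc.2 else 0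

/-!
Write `F_{T,p} = Σ_a (e_a ∧ -) ⊗ T_aᵀ` and choose `x` with `rk T(x) ≤ r` and `x_{i₀} ≠ 0`.
Split `T = T₁ + T₂` with `T₁ = e_{i₀}^* ⊗ x_{i₀}⁻¹ T(x)`, so that `T₂(x) = 0`. The flattening of
`T₁` is `(e_{i₀} ∧ -) ⊗ T(x)ᵀ`, of rank at most `C(k-1,p) r`. For `T₂`, Cartan's formula
`ι_x F + F ι_x = id ⊗ T₂(x)ᵀ = 0` makes the flattening anticommute with the interior product
`ι_x`, and `x_{i₀}⁻¹ (e_{i₀} ∧ -)` is a contracting homotopy for `ι_x`. Hence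
`Λ^p U^* ⊗ V = ker ι_x + range (e_{i₀} ∧ -)`, and the flattening maps `ker ι_x`
(dimension `≤ C(k-1,p) m`) into `ker ι_x` (dimension `≤ C(k-1,p+1) n`) and `range (e_{i₀} ∧ -)`
(dimension `≤ C(k-1,p-1) m`) into `range (e_{i₀} ∧ -)` (dimension `≤ C(k-1,p) n`).
-/

open Finset Matrix
open scoped Kronecker

lemma Nat.cast_choose_succ_right {K : Type*} [Field K] [CharZero K] {n j : ℕ} (h : j ≤ n) :
    (n.choose (j + 1) : K) = n.choose j * ((n - j) / (j + 1)) := by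
  have := congrArg (Nat.cast : ℕ → K) (Nat.choose_succ_right_eq n j)
  push_cast [Nat.cast_sub h] at this
  field_simp
  linear_combination this

lemma Fintype.sum_subtype_card_eq_dite {α M : Type*} [Fintype α] [DecidableEq α]
    [AddCommMonoid M] {r : ℕ} (X : Finset α) (f : {K : Finset α // K.card = r} → M)
    (hf : ∀ K, K.1 ≠ X → f K = 0) :
    ∑ K, f K = if h : X.card = r then f ⟨X, h⟩ else 0 := by
  split_ifs with hX
  · exact Fintype.sum_eq_single _ fun K hK => hf K fun h => hK (Subtype.ext h)
  · exact Fintype.sum_eq_zero _ fun K => hf K fun h => hX (h ▸ K.2)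

namespace Matrix

lemma kronecker_sum {R ι l m n p : Type*} [NonUnitalNonAssocSemiring R] (s : Finset ι)
    (A : Matrix l m R) (B : ι → Matrix n p R) :
    A ⊗ₖ (∑ i ∈ s, B i) = ∑ i ∈ s, A ⊗ₖ B i := by
  ext ⟨a, c⟩ ⟨b, d⟩
  simp only [kroneckerMap_apply, Matrix.sum_apply, Finset.mul_sum]

variable {F : Type*} [Field F]

theorem rank_add_le {m n : Type*} [Fintype n] (A B : Matrix m n F) :
    (A + B).rank ≤ A.rank + B.rank := by
  rw [Matrix.rank, Matrix.rank, Matrix.rank, mulVecLin_add]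
  exact (Submodule.finrank_mono (LinearMap.range_add_le _ _)).trans
    (Submodule.finrank_add_le_finrank_add_finrank _ _)

theorem rank_kronecker_le {l m n p : Type*} [Fintype l] [Fintype m] [Fintype n] [Fintype p]
    [DecidableEq m] [DecidableEq p] (A : Matrix l m F) (B : Matrix n p F) :
    (A ⊗ₖ B).rank ≤ A.rank * B.rank := by
  let bl := Pi.basisFun F l
  let bm := Pi.basisFun F m
  let bn := Pi.basisFun F n
  let bp := Pi.basisFun F p
  rw [rank_eq_finrank_range_toLin (A ⊗ₖ B) (bl.tensorProduct bn) (bm.tensorProduct bp),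
    toLin_kronecker, rank_eq_finrank_range_toLin A bl bm, rank_eq_finrank_range_toLin B bn bp,
    ← Module.finrank_tensorProduct, TensorProduct.range_map, ← TensorProduct.range_mapIncl]
  exact LinearMap.finrank_range_le _

theorem rank_le_finrank_map_add_finrank_map {m n : Type*} [Fintype m] [Fintype n]
    (M : Matrix m n F) {S₁ S₂ : Submodule F (n → F)} (hS : S₁ ⊔ S₂ = ⊤) :
    M.rank ≤ Module.finrank F (S₁.map M.mulVecLin) + Module.finrank F (S₂.map M.mulVecLin) := by
  rw [Matrix.rank, LinearMap.range_eq_map, ← hS, Submodule.map_sup]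
  exact Submodule.finrank_add_le_finrank_add_finrank _ _

section Homotopy

variable {m n o : Type*} [Fintype m] [Fintype n] [Fintype o] [DecidableEq n]
  {A : Matrix m n F} {A' : Matrix n o F} {H : Matrix n m F} {H' : Matrix o n F} {c : F}

theorem mulVec_add_mulVec_of_homotopy (hH : A' * H' + H * A = c • 1) (u : n → F) :
    A' *ᵥ (H' *ᵥ u) + H *ᵥ (A *ᵥ u) = c • u := by
  rw [mulVec_mulVec, mulVec_mulVec, ← add_mulVec, hH, smul_mulVec, one_mulVec]

/-- With `c ≠ 0`, every `u` is `c⁻¹ A' H' u + c⁻¹ H A u`, and the first summand lies in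
`ker A` once `A A' = 0`. -/
theorem ker_sup_range_eq_top_of_homotopy (hc : c ≠ 0) (hAA' : A * A' = 0)
    (hH : A' * H' + H * A = c • 1) :
    LinearMap.ker A.mulVecLin ⊔ LinearMap.range H.mulVecLin = ⊤ := by
  refine eq_top_iff.2 fun u _ => Submodule.mem_sup.2
    ⟨c⁻¹ • A' *ᵥ (H' *ᵥ u), ?_, H *ᵥ (c⁻¹ • A *ᵥ u), LinearMap.mem_range.2 ⟨_, rfl⟩, ?_⟩
  · rw [LinearMap.mem_ker, mulVecLin_apply, mulVec_smul, mulVec_mulVec, hAA', zero_mulVec,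
      smul_zero]
  · rw [mulVec_smul, ← smul_add, mulVec_add_mulVec_of_homotopy hH, smul_smul,
      inv_mul_cancel₀ hc, one_smul]

theorem finrank_ker_le_rank_of_homotopy (hc : c ≠ 0) (hH : A' * H' + H * A = c • 1) :
    Module.finrank F (LinearMap.ker A.mulVecLin) ≤ H'.rank := by
  refine (Submodule.finrank_mono fun u hu => LinearMap.mem_range.2 ⟨c⁻¹ • u, ?_⟩).trans
    (rank_mul_le_right A' H')
  have hAu : A *ᵥ u = 0 := hu
  have h := mulVec_add_mulVec_of_homotopy hH u
  rw [hAu, mulVec_zero, add_zero] at h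
  rw [mulVecLin_apply, mulVec_smul, ← mulVec_mulVec, h, smul_smul, inv_mul_cancel₀ hc, one_smul]

end Homotopy

end Matrix

namespace KoszulFlattening

variable {F : Type*} [Field F] {k : ℕ}

def koszulSign (F : Type*) [Field F] (J : Finset (Fin k)) (a : Fin k) : F :=
  (-1) ^ (J.filter (· < a)).card

lemma koszulSign_mul_self (J : Finset (Fin k)) (a : Fin k) :
    koszulSign F J a * koszulSign F J a = 1 := by
  rw [koszulSign, ← pow_add, Even.neg_one_pow ⟨_, rfl⟩]

lemma koszulSign_insert {I : Finset (Fin k)} {b : Fin k} (hb : b ∉ I) (a : Fin k) :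
    koszulSign F (insert b I) a = (if b < a then -1 else 1) * koszulSign F I a := by
  unfold koszulSign
  rw [filter_insert]
  split_ifs with h
  · rw [card_insert_of_notMem (fun h' => hb (mem_filter.1 h').1), pow_succ, mul_comm]
  · rw [one_mul]

lemma koszulSign_insert_self {I : Finset (Fin k)} {a : Fin k} (ha : a ∉ I) :
    koszulSign F (insert a I) a = koszulSign F I a := by
  rw [koszulSign_insert ha, if_neg (lt_irrefl a), one_mul]

lemma koszulSign_insert_mul_koszulSign_insert {L : Finset (Fin k)} {a b : Fin k}
    (ha : a ∉ L) (hb : b ∉ L) (hab : a ≠ b) :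
    koszulSign F (insert b L) a * koszulSign F (insert a L) b =
      -(koszulSign F L a * koszulSign F L b) := by
  rw [koszulSign_insert hb, koszulSign_insert ha]
  rcases hab.lt_or_gt with h | h
  · rw [if_neg h.asymm, if_pos h]; ring
  · rw [if_pos h, if_neg h.asymm]; ring

/-- Matrix of `e_a ∧ - : Λ^q → Λ^{q+1}` in the bases of increasing wedge monomials. -/
def extMul (F : Type*) [Field F] (q : ℕ) (a : Fin k) :
    Matrix {J : Finset (Fin k) // J.card = q + 1} {I : Finset (Fin k) // I.card = q} F :=
  Matrix.of fun J I => if a ∈ J.1 ∧ I.1 = J.1.erase a then koszulSign F J.1 a else 0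

lemma extMul_apply {q : ℕ} (a : Fin k) (J I) :
    extMul F q a J I = if a ∈ J.1 ∧ I.1 = J.1.erase a then koszulSign F J.1 a else 0 := rfl

lemma extMul_apply' {q : ℕ} (a : Fin k) (J I) :
    extMul F q a J I = if a ∉ I.1 ∧ J.1 = insert a I.1 then koszulSign F I.1 a else 0 := by
  rw [extMul_apply]
  by_cases h : a ∉ I.1 ∧ J.1 = insert a I.1
  · obtain ⟨ha, hJ⟩ := h
    have hrow : a ∈ J.1 ∧ I.1 = J.1.erase a :=
      ⟨hJ ▸ mem_insert_self a _, by rw [hJ, erase_insert ha]⟩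
    rw [if_pos hrow, if_pos ⟨ha, hJ⟩, hJ, koszulSign_insert_self ha]
  · rw [if_neg h, if_neg]
    rintro ⟨ha, hI⟩
    exact h ⟨hI ▸ notMem_erase a _, by rw [hI, insert_erase ha]⟩

lemma extMul_mul_extMul_apply {q : ℕ} (a b : Fin k) (J I) :
    (extMul F (q + 1) a * extMul F q b) J I =
      if b ∉ I.1 ∧ a ∉ insert b I.1 ∧ J.1 = insert a (insert b I.1) then
        koszulSign F (insert b I.1) a * koszulSign F I.1 b else 0 := by
  rw [mul_apply, Fintype.sum_subtype_card_eq_dite (insert b I.1) _ fun K hK => by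
    rw [extMul_apply' b, if_neg fun h => hK h.2, mul_zero]]
  by_cases hb : b ∈ I.1
  · rw [dif_neg (by rw [insert_eq_of_mem hb, I.2]; omega), if_neg fun h => h.1 hb]
  · rw [dif_pos (by rw [card_insert_of_notMem hb, I.2]), extMul_apply', extMul_apply']
    simp only [hb, not_false_eq_true, true_and, and_true, ite_true]
    split_ifs <;> simp

lemma extMul_transpose_mul_extMul_apply {q : ℕ} (a b : Fin k) (J I) :
    ((extMul F (q + 1) a)ᵀ * extMul F (q + 1) b) J I =
      if a ∉ J.1 ∧ b ∉ I.1 ∧ insert a J.1 = insert b I.1 then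
        koszulSign F J.1 a * koszulSign F I.1 b else 0 := by
  rw [mul_apply, Fintype.sum_subtype_card_eq_dite (insert a J.1) _ fun K hK => by
    rw [transpose_apply, extMul_apply' a, if_neg fun h => hK h.2, zero_mul]]
  by_cases ha : a ∈ J.1
  · rw [dif_neg (by rw [insert_eq_of_mem ha, J.2]; omega), if_neg fun h => h.1 ha]
  · rw [dif_pos (by rw [card_insert_of_notMem ha, J.2]), transpose_apply, extMul_apply',
      extMul_apply']
    simp only [ha, not_false_eq_true, true_and, ite_true, eq_comm (a := insert a J.1)]
    split_ifs <;> simp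

lemma extMul_mul_extMul_transpose_apply {q : ℕ} (a b : Fin k) (J I) :
    (extMul F q b * (extMul F q a)ᵀ) J I =
      if b ∈ J.1 ∧ a ∈ I.1 ∧ J.1.erase b = I.1.erase a then
        koszulSign F J.1 b * koszulSign F I.1 a else 0 := by
  rw [mul_apply, Fintype.sum_subtype_card_eq_dite (J.1.erase b) _ fun L hL => by
    rw [extMul_apply b, if_neg fun h => hL h.2, zero_mul]]
  by_cases hb : b ∈ J.1
  · rw [dif_pos (by rw [card_erase_of_mem hb, J.2]; rfl), transpose_apply, extMul_apply,
      extMul_apply]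
    simp only [hb, true_and, ite_true, eq_comm (b := I.1.erase a)]
    split_ifs <;> simp
  · rw [dif_neg (by rw [erase_eq_of_notMem hb, J.2]; omega), if_neg fun h => hb h.1]

lemma extMul_mul_extMul_self {q : ℕ} (a : Fin k) : extMul F (q + 1) a * extMul F q a = 0 := by
  ext J I
  rw [extMul_mul_extMul_apply, if_neg fun h => h.2.1 (mem_insert_self a _), Matrix.zero_apply]

lemma extMul_mul_extMul_add_swap {q : ℕ} (a b : Fin k) :
    extMul F (q + 1) a * extMul F q b + extMul F (q + 1) b * extMul F q a = 0 := by
  rcases eq_or_ne a b with rfl | hab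
  · rw [extMul_mul_extMul_self, add_zero]
  ext J I
  rw [Matrix.add_apply, extMul_mul_extMul_apply, extMul_mul_extMul_apply, Matrix.zero_apply,
    insert_comm b a]
  by_cases h : a ∉ I.1 ∧ b ∉ I.1 ∧ J.1 = insert a (insert b I.1)
  · obtain ⟨ha, hb, hJ⟩ := h
    rw [if_pos ⟨hb, by simp [hab, ha], hJ⟩, if_pos ⟨ha, by simp [hab.symm, hb], hJ⟩,
      koszulSign_insert hb, koszulSign_insert ha]
    rcases hab.lt_or_gt with h | h
    · rw [if_neg h.asymm, if_pos h]; ring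
    · rw [if_pos h, if_neg h.asymm]; ring
  · rw [if_neg fun h' => h ⟨fun h'' => h'.2.1 (mem_insert_of_mem h''), h'.1, h'.2.2⟩,
      if_neg fun h' => h ⟨h'.1, fun h'' => h'.2.1 (mem_insert_of_mem h''), h'.2.2⟩, add_zero]

lemma extMul_transpose_mul_extMul_add_self {q : ℕ} (a : Fin k) :
    (extMul F (q + 1) a)ᵀ * extMul F (q + 1) a + extMul F q a * (extMul F q a)ᵀ = 1 := by
  ext J I
  rw [Matrix.add_apply, extMul_transpose_mul_extMul_apply, extMul_mul_extMul_transpose_apply]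
  by_cases hJI : J = I
  · subst hJI
    by_cases ha : a ∈ J.1
    · rw [if_neg fun h => h.1 ha, if_pos ⟨ha, ha, rfl⟩, koszulSign_mul_self, zero_add,
        one_apply_eq]
    · rw [if_pos ⟨ha, ha, rfl⟩, if_neg fun h => ha h.1, koszulSign_mul_self, add_zero,
        one_apply_eq]
  · rw [one_apply_ne hJI, if_neg, if_neg, add_zero]
    · exact fun h => hJI (Subtype.ext (by rw [← insert_erase h.1, h.2.2, insert_erase h.2.1]))
    · exact fun h => hJI (Subtype.ext (by rw [← erase_insert h.1, h.2.2, erase_insert h.2.1]))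

lemma extMul_transpose_mul_extMul_add_of_ne {q : ℕ} {a b : Fin k} (hab : a ≠ b) :
    (extMul F (q + 1) a)ᵀ * extMul F (q + 1) b + extMul F q b * (extMul F q a)ᵀ = 0 := by
  ext J I
  rw [Matrix.add_apply, extMul_transpose_mul_extMul_apply, extMul_mul_extMul_transpose_apply,
    Matrix.zero_apply]
  have hiff : (a ∉ J.1 ∧ b ∉ I.1 ∧ insert a J.1 = insert b I.1) ↔
      (b ∈ J.1 ∧ a ∈ I.1 ∧ J.1.erase b = I.1.erase a) := by
    simp only [Finset.ext_iff, mem_insert, mem_erase]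
    grind
  by_cases h : b ∈ J.1 ∧ a ∈ I.1 ∧ J.1.erase b = I.1.erase a
  · obtain ⟨hb, ha, hL⟩ := h
    set L := J.1.erase b
    have hJ : J.1 = insert b L := (insert_erase hb).symm
    have hI : I.1 = insert a L := by rw [hL, insert_erase ha]
    have haL : a ∉ L := hL ▸ notMem_erase a _
    have hbL : b ∉ L := notMem_erase b _
    rw [if_pos (hiff.2 ⟨hb, ha, hL⟩), if_pos ⟨hb, ha, hL⟩, hJ, hI,
      koszulSign_insert_mul_koszulSign_insert haL hbL hab,
      koszulSign_insert_self haL, koszulSign_insert_self hbL]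
    ring
  · rw [if_neg (hiff.not.2 h), if_neg h, add_zero]

/-- The canonical anticommutation relations, with the interior product `ι_a` represented by the
transpose of `e_a ∧ -`. -/
lemma extMul_transpose_mul_extMul_add {q : ℕ} (a b : Fin k) :
    (extMul F (q + 1) a)ᵀ * extMul F (q + 1) b + extMul F q b * (extMul F q a)ᵀ =
      if a = b then 1 else 0 := by
  rcases eq_or_ne a b with rfl | hab
  · rw [if_pos rfl, extMul_transpose_mul_extMul_add_self]
  · rw [if_neg hab, extMul_transpose_mul_extMul_add_of_ne hab]

lemma koszulM_eq_sum {m n : ℕ} (p : ℕ) (T : Fin k → Fin m → Fin n → F) :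
    koszulM p T = ∑ a, extMul F p a ⊗ₖ (Matrix.of (T a))ᵀ := by
  ext ⟨J, c⟩ ⟨I, b⟩
  simp only [koszulM, Matrix.of_apply, Matrix.sum_apply, kroneckerMap_apply, extMul_apply,
    transpose_apply, ite_and, ite_mul, zero_mul]
  rw [Fintype.sum_ite_mem]
  rfl

/-- Matrix of the interior product `ι_x ⊗ id : Λ^{q+1} ⊗ F^β → Λ^q ⊗ F^β`. -/
def interior (q : ℕ) (β : Type*) [Fintype β] [DecidableEq β] (x : Fin k → F) :
    Matrix ({I : Finset (Fin k) // I.card = q} × β) ({J : Finset (Fin k) // J.card = q + 1} × β)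
      F :=
  ∑ a, x a • ((extMul F q a)ᵀ ⊗ₖ (1 : Matrix β β F))

variable {β γ δ : Type*} [Fintype β] [DecidableEq β] [Fintype γ] [DecidableEq γ]
  [Fintype δ] [DecidableEq δ]

lemma interior_mul_interior (q : ℕ) (x : Fin k → F) :
    interior q β x * interior (q + 1) β x = 0 := by
  have hexpand : interior q β x * interior (q + 1) β x =
      ∑ z ∈ univ ×ˢ univ,
        (x z.1 * x z.2) • ((extMul F (q + 1) z.1 * extMul F q z.2)ᵀ ⊗ₖ (1 : Matrix β β F)) := by
    simp only [interior, Matrix.sum_mul, Matrix.mul_sum, Matrix.smul_mul, Matrix.mul_smul,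
      Finset.smul_sum, smul_smul, ← mul_kronecker_mul, Matrix.mul_one, ← transpose_mul,
      Finset.sum_product]
  rw [hexpand]
  -- pair `(a, b)` with `(b, a)`; diagonal terms vanish on their own (needed in characteristic 2)
  refine sum_ninvolution Prod.swap (fun z => ?_) (fun z hz hswap => hz ?_) (fun _ => by simp)
    Prod.swap_swap
  · rw [Prod.fst_swap, Prod.snd_swap, mul_comm (x z.2), ← smul_add]
    simp only [← add_kronecker, ← transpose_add, extMul_mul_extMul_add_swap, transpose_zero,
      zero_kronecker, smul_zero]
  · obtain ⟨a, b⟩ := z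
    obtain rfl : a = b := congrArg Prod.snd hswap
    rw [extMul_mul_extMul_self, transpose_zero, zero_kronecker, smul_zero]

lemma interior_mul_sum_add_sum_mul_interior (q : ℕ) (x : Fin k → F)
    (B : Fin k → Matrix γ δ F) :
    interior (q + 1) γ x * (∑ b, extMul F (q + 1) b ⊗ₖ B b) +
        (∑ b, extMul F q b ⊗ₖ B b) * interior q δ x =
      1 ⊗ₖ ∑ a, x a • B a := by
  simp only [interior, Matrix.sum_mul, Matrix.mul_sum, Matrix.smul_mul, Matrix.mul_smul,
    ← mul_kronecker_mul, Matrix.one_mul, Matrix.mul_one, Finset.smul_sum]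
  conv_lhs => arg 2; rw [Finset.sum_comm]
  rw [← Finset.sum_add_distrib, kronecker_sum]
  refine Finset.sum_congr rfl fun b _ => ?_
  simp only [← Finset.sum_add_distrib, ← smul_add, ← add_kronecker,
    extMul_transpose_mul_extMul_add]
  rw [Fintype.sum_eq_single b fun a hab => by rw [if_neg hab, zero_kronecker, smul_zero],
    if_pos rfl, kronecker_smul]

lemma interior_mul_koszulM_add_koszulM_mul_interior {m n : ℕ} (p : ℕ) (x : Fin k → F)
    (T : Fin k → Fin m → Fin n → F) :
    interior (p + 1) (Fin n) x * koszulM (p + 1) T + koszulM p T * interior p (Fin m) x =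
      1 ⊗ₖ (contractT T x)ᵀ := by
  rw [koszulM_eq_sum, koszulM_eq_sum, interior_mul_sum_add_sum_mul_interior]
  congr 1
  ext c b
  simp [contractT, Matrix.sum_apply]

lemma interior_mul_extMul_add_extMul_mul_interior (q : ℕ) (x : Fin k → F) (a : Fin k) :
    interior (q + 1) β x * (extMul F (q + 1) a ⊗ₖ (1 : Matrix β β F)) +
        (extMul F q a ⊗ₖ (1 : Matrix β β F)) * interior q β x = x a • 1 := by
  have hsingle : ∀ r, ∑ b, extMul F r b ⊗ₖ (Pi.single a 1 : Fin k → Matrix β β F) b =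
      extMul F r a ⊗ₖ (1 : Matrix β β F) := fun r => by
    rw [Fintype.sum_eq_single a fun b hb => by rw [Pi.single_eq_of_ne hb, kronecker_zero],
      Pi.single_eq_same]
  have h := interior_mul_sum_add_sum_mul_interior q x (Pi.single a 1 : Fin k → Matrix β β F)
  rwa [hsingle, hsingle, Fintype.sum_eq_single a fun b hb => by
    rw [Pi.single_eq_of_ne hb, smul_zero], Pi.single_eq_same, kronecker_smul,
    one_kronecker_one] at h

lemma koszulM_mul_extMul {m n : ℕ} (q : ℕ) (T : Fin k → Fin m → Fin n → F) (a : Fin k) :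
    koszulM (q + 1) T * (extMul F q a ⊗ₖ (1 : Matrix (Fin m) (Fin m) F)) =
      -((extMul F (q + 1) a ⊗ₖ (1 : Matrix (Fin n) (Fin n) F)) * koszulM q T) := by
  rw [eq_neg_iff_add_eq_zero, koszulM_eq_sum, koszulM_eq_sum]
  simp only [Matrix.sum_mul, Matrix.mul_sum, ← mul_kronecker_mul, Matrix.mul_one,
    Matrix.one_mul, ← Finset.sum_add_distrib, ← add_kronecker, extMul_mul_extMul_add_swap,
    zero_kronecker, Finset.sum_const_zero]

lemma card_filter_notMem_eq_choose (q : ℕ) (a : Fin k) :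
    #{I : {I : Finset (Fin k) // I.card = q} | a ∉ I.1} = (k - 1).choose q := by
  have himage : ({I : {I : Finset (Fin k) // I.card = q} | a ∉ I.1} : Finset _).map
      (Function.Embedding.subtype _) = powersetCard q (univ.erase a) := by
    ext S
    simp [mem_powersetCard, subset_erase, and_comm]
  rw [← card_map, himage, card_powersetCard, card_erase_of_mem (mem_univ a), card_univ,
    Fintype.card_fin]

lemma rank_extMul_le (q : ℕ) (a : Fin k) : (extMul F q a).rank ≤ (k - 1).choose q := by
  rw [← rank_transpose, ← card_filter_notMem_eq_choose q a]
  refine rank_le_card_of_support_subset _ _ (Function.support_subset_iff'.2 fun I hI => ?_)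
  funext J
  have ha : a ∈ I.1 := by simpa using hI
  rw [row_apply, transpose_apply, extMul_apply', if_neg fun h => h.1 ha, Pi.zero_apply]

lemma rank_extMul_kronecker_one_le (q : ℕ) (a : Fin k) :
    (extMul F q a ⊗ₖ (1 : Matrix β β F)).rank ≤ (k - 1).choose q * Fintype.card β :=
  (rank_kronecker_le _ _).trans (Nat.mul_le_mul (rank_extMul_le q a) rank_one.le)

lemma finrank_ker_interior_le (q : ℕ) {x : Fin k → F} {a : Fin k} (hx : x a ≠ 0) :
    Module.finrank F (LinearMap.ker (interior q β x).mulVecLin) ≤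
      (k - 1).choose (q + 1) * Fintype.card β :=
  (finrank_ker_le_rank_of_homotopy hx (interior_mul_extMul_add_extMul_mul_interior q x a)).trans
    (rank_extMul_kronecker_one_le (q + 1) a)

theorem rank_koszulM_le_of_contractT_eq_zero {m n : ℕ} (q : ℕ) {T : Fin k → Fin m → Fin n → F}
    {x : Fin k → F} {i₀ : Fin k} (hx : x i₀ ≠ 0) (hT : contractT T x = 0) :
    (koszulM (q + 1) T).rank ≤
      min ((k - 1).choose (q + 1) * m) ((k - 1).choose (q + 2) * n) +
        min ((k - 1).choose q * m) ((k - 1).choose (q + 1) * n) := by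
  set K := koszulM (q + 1) T
  set S₁ := LinearMap.ker (interior q (Fin m) x).mulVecLin
  set S₂ := LinearMap.range (extMul F q i₀ ⊗ₖ (1 : Matrix (Fin m) (Fin m) F)).mulVecLin
  have hcartan : interior (q + 1) (Fin n) x * K = -(koszulM q T * interior q (Fin m) x) := by
    rw [eq_neg_iff_add_eq_zero, interior_mul_koszulM_add_koszulM_mul_interior, hT,
      transpose_zero, kronecker_zero]
  have hS₁ : S₁.map K.mulVecLin ≤ LinearMap.ker (interior (q + 1) (Fin n) x).mulVecLin := by
    rintro _ ⟨u, hu, rfl⟩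
    have hu' : interior q (Fin m) x *ᵥ u = 0 := hu
    rw [LinearMap.mem_ker, mulVecLin_apply, mulVecLin_apply, mulVec_mulVec, hcartan,
      neg_mulVec, ← mulVec_mulVec, hu', mulVec_zero, neg_zero]
  have hS₂ : S₂.map K.mulVecLin ≤
      LinearMap.range (extMul F (q + 1) i₀ ⊗ₖ (1 : Matrix (Fin n) (Fin n) F)).mulVecLin := by
    rintro _ ⟨_, ⟨u, rfl⟩, rfl⟩
    refine ⟨-(koszulM q T *ᵥ u), ?_⟩
    rw [mulVecLin_apply, mulVecLin_apply, mulVecLin_apply, mulVec_mulVec, koszulM_mul_extMul,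
      neg_mulVec, ← mulVec_mulVec, mulVec_neg]
  have hsup : S₁ ⊔ S₂ = ⊤ := ker_sup_range_eq_top_of_homotopy hx (interior_mul_interior q x)
    (interior_mul_extMul_add_extMul_mul_interior q x i₀)
  refine (rank_le_finrank_map_add_finrank_map K hsup).trans
    (add_le_add (le_min ?_ ?_) (le_min ?_ ?_))
  · simpa using (Submodule.finrank_map_le _ _).trans
      (finrank_ker_interior_le (β := Fin m) q hx)
  · simpa using (Submodule.finrank_mono hS₁).trans
      (finrank_ker_interior_le (β := Fin n) (q + 1) hx)
  · simpa using (Submodule.finrank_map_le _ _).trans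
      (rank_extMul_kronecker_one_le (F := F) (β := Fin m) q i₀)
  · simpa using (Submodule.finrank_mono hS₂).trans
      (rank_extMul_kronecker_one_le (F := F) (β := Fin n) (q + 1) i₀)

lemma koszulM_add {m n : ℕ} (p : ℕ) (T T' : Fin k → Fin m → Fin n → F) :
    koszulM p (T + T') = koszulM p T + koszulM p T' := by
  simp only [koszulM_eq_sum, Pi.add_apply, ← of_add_of, transpose_add, kronecker_add,
    Finset.sum_add_distrib]

lemma rank_koszulM_single_le {m n : ℕ} (p : ℕ) (i₀ : Fin k) (A : Matrix (Fin m) (Fin n) F) :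
    (koszulM p (Pi.single i₀ (of.symm A))).rank ≤ (k - 1).choose p * A.rank := by
  rw [koszulM_eq_sum, Fintype.sum_eq_single i₀ fun a ha => by
    rw [Pi.single_eq_of_ne ha, of_zero, transpose_zero, kronecker_zero], Pi.single_eq_same,
    Equiv.apply_symm_apply]
  exact (rank_kronecker_le _ _).trans
    (Nat.mul_le_mul (rank_extMul_le p i₀) (rank_transpose _).le)

lemma contractT_sub_single {m n : ℕ} (T : Fin k → Fin m → Fin n → F) (x : Fin k → F)
    (i₀ : Fin k) (A : Matrix (Fin m) (Fin n) F) :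
    contractT (T - Pi.single i₀ (of.symm A)) x = contractT T x - x i₀ • A := by
  ext b c
  rw [Matrix.sub_apply, Matrix.smul_apply, smul_eq_mul]
  simp only [contractT, of_apply, Pi.sub_apply, mul_sub, Finset.sum_sub_distrib, Pi.single_apply,
    ite_apply, Pi.zero_apply, mul_ite, mul_zero, Finset.sum_ite_eq', Finset.mem_univ, if_true]
  rfl

lemma cast_min_choose_mul_choose_succ {k q : ℕ} (hqk : q + 1 < k) (m n : ℕ) :
    ((min ((k - 1).choose (q + 1) * m) ((k - 1).choose (q + 2) * n) : ℕ) : ℚ) =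
      (k - 1).choose (q + 1) *
        min (m : ℚ) (((k : ℚ) - (q + 1 : ℕ) - 1) * n / ((q + 1 : ℕ) + 1)) := by
  rw [Nat.cast_min, Nat.cast_mul, Nat.cast_mul,
    Nat.cast_choose_succ_right (K := ℚ) (n := k - 1) (j := q + 1) (by omega),
    mul_min_of_nonneg _ _ (Nat.cast_nonneg _), Nat.cast_sub (by omega)]
  push_cast
  ring_nf

lemma cast_min_choose_mul_choose_pred {k q : ℕ} (hqk : q + 1 < k) (m n : ℕ) :
    ((min ((k - 1).choose q * m) ((k - 1).choose (q + 1) * n) : ℕ) : ℚ) =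
      (k - 1).choose (q + 1) * min (n : ℚ) (((q + 1 : ℕ) : ℚ) * m / ((k : ℚ) - (q + 1 : ℕ))) := by
  have hk : (k : ℚ) - (q + 1) ≠ 0 := by
    rw [sub_ne_zero]; exact_mod_cast hqk.ne'
  have h := Nat.cast_choose_succ_right (K := ℚ) (n := k - 1) (j := q) (by omega)
  rw [Nat.cast_min, Nat.cast_mul, Nat.cast_mul, min_comm,
    mul_min_of_nonneg _ _ (Nat.cast_nonneg _)]
  congr 1
  rw [h, Nat.cast_sub (by omega)]
  push_cast
  field_simp
  ring

theorem rank_koszulM_le {m n : ℕ} (q r : ℕ) {T : Fin k → Fin m → Fin n → F} {x : Fin k → F}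
    {i₀ : Fin k} (hx : x i₀ ≠ 0) (hr : (contractT T x).rank ≤ r) :
    (koszulM (q + 1) T).rank ≤ (k - 1).choose (q + 1) * r +
      (min ((k - 1).choose (q + 1) * m) ((k - 1).choose (q + 2) * n) +
        min ((k - 1).choose q * m) ((k - 1).choose (q + 1) * n)) := by
  set T₁ : Fin k → Fin m → Fin n → F := Pi.single i₀ (of.symm ((x i₀)⁻¹ • contractT T x))
  have hT₁ : (koszulM (q + 1) T₁).rank ≤ (k - 1).choose (q + 1) * r :=
    (rank_koszulM_single_le _ _ _).trans <| Nat.mul_le_mul_left _ <|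
      (rank_smul_of_mem_nonZeroDivisors _
        (mem_nonZeroDivisors_of_ne_zero (inv_ne_zero hx))).trans_le hr
  have hT₂ : contractT (T - T₁) x = 0 := by
    rw [contractT_sub_single, smul_smul, mul_inv_cancel₀ hx, one_smul, sub_self]
  rw [← add_sub_cancel T₁ T, koszulM_add]
  exact (rank_add_le _ _).trans (add_le_add hT₁ (rank_koszulM_le_of_contractT_eq_zero q hx hT₂))

end KoszulFlattening

open KoszulFlattening

/-- If `T` (with `dim U = k`, `dim V = m`, `dim W = n`) has minrank at most `r`
and `0 < p < k`, then
`rk F_{T,p} ≤ C(k-1,p) · (r + min(m, (k-p-1)n/(p+1)) + min(n, p·m/(k-p)))`. -/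
theorem stmt10 {F : Type*} [Field F] {k m n : ℕ} (p r : ℕ) (hp : 0 < p) (hpk : p < k)
    (T : Fin k → Fin m → Fin n → F)
    (hT : ∃ x : Fin k → F, x ≠ 0 ∧ (contractT T x).rank ≤ r) :
    ((koszulM p T).rank : ℚ) ≤ (Nat.choose (k - 1) p : ℚ) *
      ((r : ℚ) + min (m : ℚ) (((k : ℚ) - p - 1) * n / ((p : ℚ) + 1))
        + min (n : ℚ) ((p : ℚ) * m / ((k : ℚ) - p))) := by
  obtain ⟨q, rfl⟩ : ∃ q, p = q + 1 := ⟨p - 1, by omega⟩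
  obtain ⟨x, hx, hxr⟩ := hT
  obtain ⟨i₀, hi₀⟩ := Function.ne_iff.1 hx
  refine (Nat.cast_le.2 (rank_koszulM_le q r hi₀ hxr)).trans_eq ?_
  rw [Nat.cast_add, Nat.cast_add, Nat.cast_mul, cast_min_choose_mul_choose_succ hpk,
    cast_min_choose_mul_choose_pred hpk]
  ring
end

section
/- Let $T = e_1 \otimes A_1 + e_2 \otimes A_2 + e_3 \otimes A_3 \in F^3 \otimes F^m \otimes F^m$, and suppose $\operatorname{rk}(A_1) \leq r$. Then the $3m \times 3m$ block matrix $\begin{bmatrix} -A_2 & A_1 & 0 \\ -A_3 & 0 & A_1 \\ 0 & -A_3 & A_2 \end{bmatrix}$ has rank at most $2m + 2r$. -/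
open Matrix

lemma rank_add_le' {F : Type*} [Field F] {k l : Type*} [Fintype k] [Fintype l]
    (A B : Matrix k l F) : (A + B).rank ≤ A.rank + B.rank := by
  simp only [Matrix.rank]
  refine le_trans (Submodule.finrank_mono ?_) (Submodule.finrank_add_le_finrank_add_finrank _ _)
  rintro x ⟨v, rfl⟩
  rw [mulVecLin_add, LinearMap.add_apply]
  exact Submodule.add_mem_sup (LinearMap.mem_range_self A.mulVecLin v)
    (LinearMap.mem_range_self B.mulVecLin v)

/-- embedding matrix placing `Fin m` into block `k` -/
def Emb (F : Type*) [Field F] (m : ℕ) (k : Fin 3) : Matrix (Fin 3 × Fin m) (Fin m) F :=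
  Matrix.of fun p j => if p.1 = k ∧ p.2 = j then 1 else 0

lemma Emb_mul {F : Type*} [Field F] {m : ℕ} {n : Type*} [Fintype n] (k : Fin 3)
    (B : Matrix (Fin m) n F) (p q) :
    (Emb F m k * B) p q = if p.1 = k then B p.2 q else 0 := by
  simp [Emb, Matrix.mul_apply, ite_and]

lemma mul_EmbT {F : Type*} [Field F] {m : ℕ} {n : Type*} [Fintype n] (k : Fin 3)
    (B : Matrix n (Fin m) F) (p q) :
    (B * (Emb F m k)ᵀ) p q = if q.1 = k then B p q.2 else 0 := by
  simp [Emb, Matrix.mul_apply, ite_and, eq_comm]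

/-- For `T = e₁ ⊗ A₁ + e₂ ⊗ A₂ + e₃ ⊗ A₃` with `rk A₁ ≤ r`, the `3m × 3m` block matrix
`[[-A₂, A₁, 0], [-A₃, 0, A₁], [0, -A₃, A₂]]` (the Koszul flattening for `k = 3`, `p = 1`)
has rank at most `2m + 2r`. -/
theorem stmt12 {F : Type*} [Field F] {m : ℕ} (A₁ A₂ A₃ : Matrix (Fin m) (Fin m) F)
    (r : ℕ) (h : A₁.rank ≤ r) :
    (Matrix.of fun (p q : Fin 3 × Fin m) =>
      (![![-A₂, A₁, 0], ![-A₃, 0, A₁], ![0, -A₃, A₂]] : Fin 3 → Fin 3 → Matrix (Fin m) (Fin m) F)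
        p.1 q.1 p.2 q.2).rank ≤ 2 * m + 2 * r := by
  classical
  set C : Matrix (Fin 3 × Fin m) (Fin m) F :=
    Matrix.of (fun p j => (![-A₂, -A₃, 0] : Fin 3 → Matrix (Fin m) (Fin m) F) p.1 p.2 j) with hC
  set D : Matrix (Fin m) (Fin 3 × Fin m) F :=
    Matrix.of (fun j q => (![0, -A₃, A₂] : Fin 3 → Matrix (Fin m) (Fin m) F) q.1 j q.2) with hD
  have hsplit : (Matrix.of fun (p q : Fin 3 × Fin m) =>
      (![![-A₂, A₁, 0], ![-A₃, 0, A₁], ![0, -A₃, A₂]] : Fin 3 → Fin 3 → Matrix (Fin m) (Fin m) F)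
        p.1 q.1 p.2 q.2)
      = C * (Emb F m 0)ᵀ + Emb F m 2 * D + Emb F m 0 * A₁ * (Emb F m 1)ᵀ
        + Emb F m 1 * A₁ * (Emb F m 2)ᵀ := by
    ext ⟨i, x⟩ ⟨j, y⟩
    simp only [Matrix.add_apply, mul_EmbT, Emb_mul, Matrix.of_apply, hC, hD]
    fin_cases i <;> fin_cases j <;> simp
  rw [hsplit]
  have h1 : (C * (Emb F m 0)ᵀ).rank ≤ m :=
    le_trans (rank_mul_le_right _ _) ((Emb F m 0)ᵀ.rank_le_card_height.trans (by simp))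
  have h2 : (Emb F m 2 * D).rank ≤ m :=
    le_trans (rank_mul_le_right _ _) (D.rank_le_card_height.trans (by simp))
  have h3 : (Emb F m 0 * A₁ * (Emb F m 1)ᵀ).rank ≤ r :=
    le_trans (rank_mul_le_left _ _) (le_trans (rank_mul_le_right _ _) h)
  have h4 : (Emb F m 1 * A₁ * (Emb F m 2)ᵀ).rank ≤ r :=
    le_trans (rank_mul_le_left _ _) (le_trans (rank_mul_le_right _ _) h)
  calc _ ≤ _ + (Emb F m 1 * A₁ * (Emb F m 2)ᵀ).rank := rank_add_le' _ _
    _ ≤ 2 * m + 2 * r := by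
        have := rank_add_le' (C * (Emb F m 0)ᵀ + Emb F m 2 * D) (Emb F m 0 * A₁ * (Emb F m 1)ᵀ)
        have := rank_add_le' (C * (Emb F m 0)ᵀ) (Emb F m 2 * D)
        omega
end

section
/- Let $H$ be a 3-uniform 3-partite hypergraph whose edge set is an antichain with respect to the coordinatewise partial order on triples of vertex labels. Then the slice rank of the associated tensor $T_H$ equals the size of a minimum vertex cover of $H$. (In particular, the slice rank is at most the minimum vertex cover size; the reverse inequality holds under the antichain condition.) -/
open scoped BigOperators

open Finset in
/-- Echelon-form lemma: the set of "non-pivot" coordinates of the annihilator of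
`r` vectors has size at most `r`. -/
lemma exists_echelon {F : Type*} [Field F] {n r : ℕ} (u : Fin r → Fin n → F) :
    ∃ S : Finset (Fin n), S.card ≤ r ∧ ∀ i ∉ S, ∃ x : Fin n → F,
      (∀ t, ∑ i', x i' * u t i' = 0) ∧ x i = 1 ∧ ∀ i' < i, x i' = 0 := by
  classical
  let L : (Fin n → F) →ₗ[F] (Fin r → F) :=
    { toFun := fun x t => ∑ i', x i' * u t i'
      map_add' := by intro a b; funext t; simp [add_mul, Finset.sum_add_distrib]
      map_smul' := by intro c a; funext t; simp [Finset.mul_sum, mul_assoc] }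
  let X := LinearMap.ker L
  let G : Finset (Fin n) := univ.filter (fun i => ∃ x ∈ X, x i ≠ 0 ∧ ∀ i' < i, x i' = 0)
  have hGdef : ∀ i, i ∈ G ↔ ∃ x ∈ X, x i ≠ 0 ∧ ∀ i' < i, x i' = 0 := by
    intro i; simp [G]
  -- restriction to G is injective on X
  have hinj : ∀ x : Fin n → F, x ∈ X → (∀ i ∈ G, x i = 0) → x = 0 := by
    intro x hx hG
    by_contra hne
    have hs : (univ.filter (fun i => x i ≠ 0)).Nonempty := by
      rw [Finset.filter_nonempty_iff]
      obtain ⟨i, hi⟩ := Function.ne_iff.mp hne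
      exact ⟨i, mem_univ i, hi⟩
    set i₀ := (univ.filter (fun i => x i ≠ 0)).min' hs with hi₀
    have h1 : x i₀ ≠ 0 := by
      have := Finset.min'_mem _ hs
      rw [Finset.mem_filter] at this; exact this.2
    have h2 : ∀ i' < i₀, x i' = 0 := by
      intro i' hlt
      by_contra h
      have : i₀ ≤ i' := Finset.min'_le _ _ (by simp [h])
      exact absurd hlt (not_lt.mpr this)
    exact h1 (hG i₀ ((hGdef i₀).mpr ⟨x, hx, h1, h2⟩))
  -- dimension count
  have hdim : n ≤ r + G.card := by
    have hrn := LinearMap.finrank_range_add_finrank_ker L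
    have h1 : Module.finrank F (LinearMap.range L) ≤ r := by
      simpa using (Submodule.finrank_le (LinearMap.range L)).trans_eq
        (by simp)
    -- restriction map X →ₗ (G → F)
    let ρ : X →ₗ[F] (G → F) :=
      { toFun := fun x i => x.1 i.1
        map_add' := by intro a b; rfl
        map_smul' := by intro c a; rfl }
    have hρ : Function.Injective ρ := by
      intro a b hab
      apply Subtype.ext
      have : (a.1 - b.1) ∈ X := X.sub_mem a.2 b.2
      have hz : a.1 - b.1 = 0 := by
        apply hinj _ this
        intro i hi
        have := congrFun hab ⟨i, hi⟩
        simp [ρ] at this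
        simp [Pi.sub_apply, this]
      have := sub_eq_zero.mp hz
      exact this
    have h2 : Module.finrank F X ≤ G.card := by
      have := LinearMap.finrank_le_finrank_of_injective hρ
      simpa using this
    have h3 : Module.finrank F (Fin n → F) = n := by simp
    have h2' : Module.finrank F (LinearMap.ker L) ≤ G.card := h2
    omega
  refine ⟨Gᶜ, ?_, ?_⟩
  · have : Gᶜ.card = n - G.card := by
      rw [Finset.card_compl]; simp
    omega
  · intro i hi
    rw [Finset.notMem_compl] at hi
    obtain ⟨x, hxX, hx0, hxlt⟩ := (hGdef i).mp hi
    refine ⟨(x i)⁻¹ • x, ?_, ?_, ?_⟩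
    · intro t
      have hxk : ∀ t, ∑ i', x i' * u t i' = 0 := by
        intro t; exact congrFun (LinearMap.mem_ker.mp hxX) t
      simp only [Pi.smul_apply, smul_eq_mul, mul_assoc, ← Finset.mul_sum, hxk, mul_zero]
    · simp [inv_mul_cancel₀ hx0]
    · intro i' hlt; simp [hxlt i' hlt]

/-- Pairing a slice decomposition against an annihilating vector gives zero. -/
lemma pair0 {F : Type*} [Field F] {α β : Type*} [Fintype α] [Fintype β] {r : ℕ}
    (a : α → F) (b : β → F) (u : Fin r → α → F) (M : Fin r → β → F)
    (hx : ∀ t, ∑ i, a i * u t i = 0) :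
    ∑ i, ∑ j, a i * (b j * (∑ t, u t i * M t j)) = 0 := by
  calc ∑ i, ∑ j, a i * (b j * ∑ t, u t i * M t j)
      = ∑ i, ∑ j, ∑ t, (a i * u t i) * (b j * M t j) := by
        refine Finset.sum_congr rfl fun i _ => Finset.sum_congr rfl fun j _ => ?_
        rw [Finset.mul_sum, Finset.mul_sum]
        exact Finset.sum_congr rfl fun t _ => by ring
    _ = ∑ t, ∑ i, ∑ j, (a i * u t i) * (b j * M t j) := by
        rw [show (∑ i, ∑ j, ∑ t, (a i * u t i) * (b j * M t j))
            = ∑ i, ∑ t, ∑ j, (a i * u t i) * (b j * M t j) from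
          Finset.sum_congr rfl fun i _ => Finset.sum_comm]
        exact Finset.sum_comm
    _ = ∑ t, (∑ i, a i * u t i) * (∑ j, b j * M t j) := by
        refine Finset.sum_congr rfl fun t _ => ?_
        rw [Finset.sum_mul]
        exact Finset.sum_congr rfl fun i _ => (Finset.mul_sum _ _ _).symm
    _ = 0 := by simp [hx]

/-- Summation over an indexing of a finset. -/
lemma sum_indicator_finset {α F : Type*} [DecidableEq α] [Field F] (s : Finset α)
    (i : α) (φ : α → F) :
    ∑ t : Fin s.card, (if i = (s.equivFin.symm t : α) then 1 else 0) * φ (s.equivFin.symm t : α)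
      = if i ∈ s then φ i else 0 := by
  classical
  have h1 : ∑ t : Fin s.card, (if i = (s.equivFin.symm t : α) then 1 else 0) * φ (s.equivFin.symm t : α)
      = ∑ a : s, (if i = (a : α) then 1 else 0) * φ (a : α) :=
    Equiv.sum_comp s.equivFin.symm (fun a => (if i = (a : α) then 1 else 0) * φ (a : α))
  rw [h1, Finset.sum_coe_sort s (fun a => (if i = a then (1:F) else 0) * φ a)]
  simp only [ite_mul, one_mul, zero_mul]
  exact Finset.sum_ite_eq s i φ

/-- Slice rank at most `r`. -/
def SliceRankLE {F : Type*} [Field F] {α β γ : Type*} [Fintype α] [Fintype β] [Fintype γ]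
    (T : α → β → γ → F) (r : ℕ) : Prop :=
  ∃ (r₁ r₂ r₃ : ℕ), r₁ + r₂ + r₃ ≤ r ∧
    ∃ (u : Fin r₁ → α → F) (M : Fin r₁ → β → γ → F)
      (v : Fin r₂ → β → F) (N : Fin r₂ → α → γ → F)
      (w : Fin r₃ → γ → F) (P : Fin r₃ → α → β → F),
      ∀ i j k, T i j k =
        (∑ t, u t i * M t j k) + (∑ t, v t j * N t i k) + (∑ t, w t k * P t i j)

/-- Tao–Sawin: for a 3-uniform 3-partite hypergraph `H` with edge set `E` forming an
antichain (with respect to the coordinatewise partial order on triples of vertex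
labels), the slice rank of the associated 0/1 tensor `T_H` equals the size of a minimum
vertex cover of `H`:  `srk(T_H) ≤ r` iff there is a vertex cover of total size `≤ r`. -/
theorem stmt14 {F : Type*} [Field F] {n₁ n₂ n₃ : ℕ}
    (E : Finset (Fin n₁ × Fin n₂ × Fin n₃))
    (hanti : ∀ e₁ ∈ E, ∀ e₂ ∈ E, e₁ ≤ e₂ → e₁ = e₂) (r : ℕ) :
    SliceRankLE (fun i j k => if ((i, j, k) : Fin n₁ × Fin n₂ × Fin n₃) ∈ E
        then (1 : F) else 0) r ↔
      ∃ (S₁ : Finset (Fin n₁)) (S₂ : Finset (Fin n₂)) (S₃ : Finset (Fin n₃)),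
        (∀ e ∈ E, e.1 ∈ S₁ ∨ e.2.1 ∈ S₂ ∨ e.2.2 ∈ S₃) ∧
        S₁.card + S₂.card + S₃.card ≤ r := by
  classical
  constructor
  · rintro ⟨r₁, r₂, r₃, hr, u, M, v, N, w, P, hT⟩
    obtain ⟨S₁, hS₁c, hS₁⟩ := exists_echelon u
    obtain ⟨S₂, hS₂c, hS₂⟩ := exists_echelon v
    obtain ⟨S₃, hS₃c, hS₃⟩ := exists_echelon w
    refine ⟨S₁, S₂, S₃, ?_, by omega⟩
    rintro ⟨i, j, k⟩ he
    by_contra hcov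
    push_neg at hcov
    obtain ⟨hi, hj, hk⟩ := hcov
    obtain ⟨x, hxu, hxi, hxlt⟩ := hS₁ i hi
    obtain ⟨y, hyv, hyj, hylt⟩ := hS₂ j hj
    obtain ⟨z, hzw, hzk, hzlt⟩ := hS₃ k hk
    set Q : F := ∑ i', ∑ j', ∑ k', x i' * y j' * z k' *
      (if ((i', j', k') : Fin n₁ × Fin n₂ × Fin n₃) ∈ E then (1:F) else 0) with hQdef
    have hQ1 : Q = 1 := by
      have hQp : Q = ∑ p : Fin n₁ × Fin n₂ × Fin n₃,
          (if p ∈ E then x p.1 * y p.2.1 * z p.2.2 else 0) := by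
        rw [hQdef, Fintype.sum_prod_type]
        refine Finset.sum_congr rfl fun i' _ => ?_
        rw [Fintype.sum_prod_type]
        refine Finset.sum_congr rfl fun j' _ => Finset.sum_congr rfl fun k' _ => ?_
        rw [mul_ite, mul_one, mul_zero]
      rw [hQp, Finset.sum_ite_mem, Finset.univ_inter]
      rw [Finset.sum_eq_single_of_mem (⟨i, j, k⟩ : Fin n₁ × Fin n₂ × Fin n₃) he ?side]
      · simp [hxi, hyj, hzk]
      case side =>
        intro b hb hne
        by_cases h1 : b.1 < i
        · simp [hxlt b.1 h1]
        by_cases h2 : b.2.1 < j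
        · simp [hylt b.2.1 h2]
        by_cases h3 : b.2.2 < k
        · simp [hzlt b.2.2 h3]
        exfalso
        apply hne
        refine (hanti (i, j, k) he b hb ?_).symm
        rw [Prod.le_def]
        exact ⟨not_lt.mp h1, Prod.le_def.mpr ⟨not_lt.mp h2, not_lt.mp h3⟩⟩
    have hQ0 : Q = 0 := by
      have hsplit : Q = (∑ i', ∑ j', ∑ k', x i' * y j' * z k' * (∑ t, u t i' * M t j' k'))
          + (∑ i', ∑ j', ∑ k', x i' * y j' * z k' * (∑ t, v t j' * N t i' k'))
          + (∑ i', ∑ j', ∑ k', x i' * y j' * z k' * (∑ t, w t k' * P t i' j')) := by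
        rw [hQdef]
        simp only [← Finset.sum_add_distrib]
        refine Finset.sum_congr rfl fun i' _ => Finset.sum_congr rfl fun j' _ =>
          Finset.sum_congr rfl fun k' _ => ?_
        rw [show (if ((i', j', k') : Fin n₁ × Fin n₂ × Fin n₃) ∈ E then (1:F) else 0) = _
          from hT i' j' k']
        ring
      have hA : (∑ i', ∑ j', ∑ k', x i' * y j' * z k' * (∑ t, u t i' * M t j' k')) = 0 := by
        have h := pair0 x (fun q : Fin n₂ × Fin n₃ => y q.1 * z q.2) u
          (fun t q => M t q.1 q.2) hxu
        rw [← h]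
        refine Finset.sum_congr rfl fun i' _ => ?_
        rw [Fintype.sum_prod_type]
        exact Finset.sum_congr rfl fun j' _ => Finset.sum_congr rfl fun k' _ => by ring
      have hB : (∑ i', ∑ j', ∑ k', x i' * y j' * z k' * (∑ t, v t j' * N t i' k')) = 0 := by
        have h := pair0 y (fun q : Fin n₁ × Fin n₃ => x q.1 * z q.2) v
          (fun t q => N t q.1 q.2) hyv
        rw [Finset.sum_comm, ← h]
        refine Finset.sum_congr rfl fun j' _ => ?_
        rw [Fintype.sum_prod_type]
        exact Finset.sum_congr rfl fun i' _ => Finset.sum_congr rfl fun k' _ => by ring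
      have hC : (∑ i', ∑ j', ∑ k', x i' * y j' * z k' * (∑ t, w t k' * P t i' j')) = 0 := by
        have h := pair0 z (fun q : Fin n₁ × Fin n₂ => x q.1 * y q.2) w
          (fun t q => P t q.1 q.2) hzw
        rw [show (∑ i', ∑ j', ∑ k', x i' * y j' * z k' * (∑ t, w t k' * P t i' j'))
            = ∑ i', ∑ k', ∑ j', x i' * y j' * z k' * (∑ t, w t k' * P t i' j') from
          Finset.sum_congr rfl fun i' _ => Finset.sum_comm, Finset.sum_comm, ← h]
        refine Finset.sum_congr rfl fun k' _ => ?_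
        rw [Fintype.sum_prod_type]
        exact Finset.sum_congr rfl fun i' _ => Finset.sum_congr rfl fun j' _ => by ring
      rw [hsplit, hA, hB, hC]
      ring
    exact one_ne_zero (hQ1 ▸ hQ0)
  · rintro ⟨S₁, S₂, S₃, hcov, hcard⟩
    refine ⟨S₁.card, S₂.card, S₃.card, hcard,
      fun t i => if i = (S₁.equivFin.symm t : Fin n₁) then 1 else 0,
      fun t j k => if (((S₁.equivFin.symm t : Fin n₁), j, k) : Fin n₁ × Fin n₂ × Fin n₃) ∈ E then 1 else 0,
      fun t j => if j = (S₂.equivFin.symm t : Fin n₂) then 1 else 0,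
      fun t i k => if (((i, (S₂.equivFin.symm t : Fin n₂), k) : Fin n₁ × Fin n₂ × Fin n₃) ∈ E ∧ i ∉ S₁) then 1 else 0,
      fun t k => if k = (S₃.equivFin.symm t : Fin n₃) then 1 else 0,
      fun t i j => if (((i, j, (S₃.equivFin.symm t : Fin n₃)) : Fin n₁ × Fin n₂ × Fin n₃) ∈ E ∧ i ∉ S₁ ∧ j ∉ S₂) then 1 else 0,
      ?_⟩
    intro i j k
    rw [sum_indicator_finset S₁ i
        (fun a => if ((a, j, k) : Fin n₁ × Fin n₂ × Fin n₃) ∈ E then (1:F) else 0),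
      sum_indicator_finset S₂ j
        (fun b => if (((i, b, k) : Fin n₁ × Fin n₂ × Fin n₃) ∈ E ∧ i ∉ S₁) then (1:F) else 0),
      sum_indicator_finset S₃ k
        (fun c => if (((i, j, c) : Fin n₁ × Fin n₂ × Fin n₃) ∈ E ∧ i ∉ S₁ ∧ j ∉ S₂) then (1:F) else 0)]
    have hc := hcov (i, j, k)
    by_cases he : ((i, j, k) : Fin n₁ × Fin n₂ × Fin n₃) ∈ E
    · by_cases h1 : i ∈ S₁
      · simp [he, h1]
      · by_cases h2 : j ∈ S₂
        · simp [he, h1, h2]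
        · have h3 : k ∈ S₃ := by
            rcases hc he with h | h | h
            · exact absurd h h1
            · exact absurd h h2
            · exact h
          simp [he, h1, h2, h3]
    · simp [he]
end
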